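/- arXiv:2010.09146 — 4 statements merged into one kernel-verified Lean document; each statement's English description precedes it below -/
import Mathlib

section
/- Let Γ be a group, R a Γ-graded ring, and let 𝒩 ⊆ 𝔐(R) be the set of square homogeneous matrices over R that are not gr-full. Let ℒ = {A ∈ 𝔐(R) : A ⊕ I_n is an iterated determinantal sum of elements of 𝒩 for some n ≥ 0, where I_n is the n×n identity matrix and the case n = 0 means A itself is such a determinantal sum}. Then ℒ is a gr-matrix ideal contained in every gr-matrix ideal of R (it is the least gr-matrix ideal). Consequently, R possesses a proper gr-matrix ideal if and only if no identity matrix can be expressed as an iterated determinantal sum of elements of 𝒩. -/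
open Matrix

universe u v w

section GradedDefs

variable {Γ : Type u} [Group Γ] {R : Type v} [Ring R]

/-- `A` is a homogeneous matrix of distribution `(α, β)`:
its `(i,j)` entry lies in `𝒜 (α i * (β j)⁻¹)`. -/
def IsHomog (𝒜 : Γ → AddSubgroup R) {m n : ℕ}
    (A : Matrix (Fin m) (Fin n) R) (α : Fin m → Γ) (β : Fin n → Γ) : Prop :=
  ∀ i j, A i j ∈ 𝒜 (α i * (β j)⁻¹)

/-- `A` is a homogeneous matrix for some distribution. -/
def IsHomogSq (𝒜 : Γ → AddSubgroup R) {m n : ℕ}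
    (A : Matrix (Fin m) (Fin n) R) : Prop :=
  ∃ (α : Fin m → Γ) (β : Fin n → Γ), IsHomog 𝒜 A α β

end GradedDefs

/-- Square matrices over `R` of arbitrary finite size. -/
abbrev SqMat (R : Type v) : Type v := Σ n : ℕ, Matrix (Fin n) (Fin n) R

section GradedDefs

variable {Γ : Type u} [Group Γ] {R : Type v} [Ring R]

/-- Diagonal sum `A ⊕ B` of two (rectangular) matrices. -/
def diagSum {m n m' n' : ℕ} (A : Matrix (Fin m) (Fin n) R)
    (B : Matrix (Fin m') (Fin n') R) : Matrix (Fin (m + m')) (Fin (n + n')) R :=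
  Matrix.reindex finSumFinEquiv finSumFinEquiv (Matrix.fromBlocks A 0 0 B)

/-- Block lower triangular matrix `[[A, 0], [C, B]]`. -/
def lowerBlockSum {n m : ℕ} (A : Matrix (Fin n) (Fin n) R) (B : Matrix (Fin m) (Fin m) R)
    (C : Matrix (Fin m) (Fin n) R) : Matrix (Fin (n + m)) (Fin (n + m)) R :=
  Matrix.reindex finSumFinEquiv finSumFinEquiv (Matrix.fromBlocks A 0 C B)

/-- Block upper triangular matrix `[[A, C], [0, B]]` with rectangular blocks. -/
def upperBlockSum {m n m' n' : ℕ} (A : Matrix (Fin m) (Fin n) R)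
    (B : Matrix (Fin m') (Fin n') R) (C : Matrix (Fin m) (Fin n') R) :
    Matrix (Fin (m + m')) (Fin (n + n')) R :=
  Matrix.reindex finSumFinEquiv finSumFinEquiv (Matrix.fromBlocks A C 0 B)

/-- `C` is the determinantal sum of `A` and `B` with respect to some column or row:
`A` and `B` agree away from that column (row) and the distinguished column (row) of `C`
is the sum of the corresponding columns (rows) of `A` and `B`. -/
def IsDetSum {n : ℕ} (A B C : Matrix (Fin n) (Fin n) R) : Prop :=
  (∃ c : Fin n, (∀ i j, j ≠ c → A i j = B i j) ∧
      ∀ i j, C i j = if j = c then A i j + B i j else A i j) ∨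
  (∃ r : Fin n, (∀ i j, i ≠ r → A i j = B i j) ∧
      ∀ i j, C i j = if i = r then A i j + B i j else A i j)

/-- `C` is the determinantal sum of the homogeneous matrices `A` and `B`
(which have a common distribution). -/
def GrDetSum (𝒜 : Γ → AddSubgroup R) {n : ℕ} (A B C : Matrix (Fin n) (Fin n) R) : Prop :=
  (∃ α β : Fin n → Γ, IsHomog 𝒜 A α β ∧ IsHomog 𝒜 B α β) ∧ IsDetSum A B C

/-- A square homogeneous matrix `A` is gr-full if whenever `A = P * Q` with `P`
homogeneous of distribution `(α, lam)` and `Q` homogeneous of distribution `(lam, β)`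
where `lam` has length `r`, then `r ≥ n`. -/
def IsGrFull (𝒜 : Γ → AddSubgroup R) {n : ℕ} (A : Matrix (Fin n) (Fin n) R) : Prop :=
  ∀ (r : ℕ) (P : Matrix (Fin n) (Fin r) R) (Q : Matrix (Fin r) (Fin n) R)
    (α : Fin n → Γ) (lam : Fin r → Γ) (β : Fin n → Γ),
    IsHomog 𝒜 P α lam → IsHomog 𝒜 Q lam β → A = P * Q → n ≤ r

/-- gr-prime matrix ideal: a set of square homogeneous matrices satisfying (PM1)–(PM6). -/
structure IsGrPrimeMatrixIdeal (𝒜 : Γ → AddSubgroup R) (P : Set (SqMat R)) : Prop where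
  subset_homog : ∀ p ∈ P, IsHomogSq 𝒜 p.2
  pm1 : ∀ {n : ℕ} (A : Matrix (Fin n) (Fin n) R),
    IsHomogSq 𝒜 A → ¬ IsGrFull 𝒜 A → (⟨n, A⟩ : SqMat R) ∈ P
  pm2 : ∀ {n : ℕ} (A B C : Matrix (Fin n) (Fin n) R),
    (⟨n, A⟩ : SqMat R) ∈ P → (⟨n, B⟩ : SqMat R) ∈ P → GrDetSum 𝒜 A B C →
    (⟨n, C⟩ : SqMat R) ∈ P
  pm3 : ∀ {m n : ℕ} (A : Matrix (Fin m) (Fin m) R) (B : Matrix (Fin n) (Fin n) R),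
    (⟨m, A⟩ : SqMat R) ∈ P → IsHomogSq 𝒜 B → (⟨m + n, diagSum A B⟩ : SqMat R) ∈ P
  pm4 : ∀ {m n : ℕ} (A : Matrix (Fin m) (Fin m) R) (B : Matrix (Fin n) (Fin n) R),
    IsHomogSq 𝒜 A → IsHomogSq 𝒜 B → (⟨m + n, diagSum A B⟩ : SqMat R) ∈ P →
    (⟨m, A⟩ : SqMat R) ∈ P ∨ (⟨n, B⟩ : SqMat R) ∈ P
  pm5 : (⟨1, (1 : Matrix (Fin 1) (Fin 1) R)⟩ : SqMat R) ∉ P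
  pm6 : ∀ {n : ℕ} (A : Matrix (Fin n) (Fin n) R) (e f : Equiv.Perm (Fin n)),
    (⟨n, A⟩ : SqMat R) ∈ P → (⟨n, A.submatrix ⇑e ⇑f⟩ : SqMat R) ∈ P

/-- gr-matrix ideal: a set of square homogeneous matrices satisfying (I1)–(I5). -/
structure IsGrMatrixIdeal (𝒜 : Γ → AddSubgroup R) (I : Set (SqMat R)) : Prop where
  subset_homog : ∀ p ∈ I, IsHomogSq 𝒜 p.2
  i1 : ∀ {n : ℕ} (A : Matrix (Fin n) (Fin n) R),
    IsHomogSq 𝒜 A → ¬ IsGrFull 𝒜 A → (⟨n, A⟩ : SqMat R) ∈ I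
  i2 : ∀ {n : ℕ} (A B C : Matrix (Fin n) (Fin n) R),
    (⟨n, A⟩ : SqMat R) ∈ I → (⟨n, B⟩ : SqMat R) ∈ I → GrDetSum 𝒜 A B C →
    (⟨n, C⟩ : SqMat R) ∈ I
  i3 : ∀ {m n : ℕ} (A : Matrix (Fin m) (Fin m) R) (B : Matrix (Fin n) (Fin n) R),
    (⟨m, A⟩ : SqMat R) ∈ I → IsHomogSq 𝒜 B → (⟨m + n, diagSum A B⟩ : SqMat R) ∈ I
  i4 : ∀ {n : ℕ} (A : Matrix (Fin n) (Fin n) R) (e f : Equiv.Perm (Fin n)),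
    (⟨n, A⟩ : SqMat R) ∈ I → (⟨n, A.submatrix ⇑e ⇑f⟩ : SqMat R) ∈ I
  i5 : ∀ {n : ℕ} (A : Matrix (Fin n) (Fin n) R),
    (⟨n + 1, diagSum A (1 : Matrix (Fin 1) (Fin 1) R)⟩ : SqMat R) ∈ I →
    (⟨n, A⟩ : SqMat R) ∈ I

/-- The diagonal sum of `r` copies of `A`. -/
def diagIter {n : ℕ} (A : Matrix (Fin n) (Fin n) R) :
    (r : ℕ) → Matrix (Fin (n * r)) (Fin (n * r)) R
  | 0 => 0
  | r + 1 => diagSum (diagIter A r) A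

/-- Iterated determinantal sums (with arbitrary bracketing) of elements of `W`. -/
inductive IsDetSumOf (𝒜 : Γ → AddSubgroup R) (W : Set (SqMat R)) : SqMat R → Prop
  | base (p : SqMat R) (hp : p ∈ W) : IsDetSumOf 𝒜 W p
  | step {n : ℕ} (A B C : Matrix (Fin n) (Fin n) R)
      (hA : IsDetSumOf 𝒜 W ⟨n, A⟩) (hB : IsDetSumOf 𝒜 W ⟨n, B⟩)
      (h : GrDetSum 𝒜 A B C) : IsDetSumOf 𝒜 W ⟨n, C⟩

/-- The homogeneous rational closure of degree `γ`: entries `(j,i)` of inverses of matrices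
`A^f` with `A ∈ Sig` homogeneous of distribution `(α, β)` and `β j * (α i)⁻¹ = γ`. -/
def RatCl (𝒜 : Γ → AddSubgroup R) {S : Type w} [Ring S] (Sig : Set (SqMat R)) (f : R →+* S)
    (γ : Γ) : Set S :=
  {x | ∃ (n : ℕ) (A : Matrix (Fin n) (Fin n) R) (α β : Fin n → Γ) (i j : Fin n)
        (B : Matrix (Fin n) (Fin n) S),
      (⟨n, A⟩ : SqMat R) ∈ Sig ∧ IsHomog 𝒜 A α β ∧ β j * (α i)⁻¹ = γ ∧
      (A.map ⇑f) * B = 1 ∧ B * (A.map ⇑f) = 1 ∧ B j i = x}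

/-- gr-lower semimultiplicative set of square homogeneous matrices. -/
def IsGrLowerSemimult (𝒜 : Γ → AddSubgroup R) (Sig : Set (SqMat R)) : Prop :=
  ((⟨1, (1 : Matrix (Fin 1) (Fin 1) R)⟩ : SqMat R) ∈ Sig) ∧
  ∀ {n m : ℕ} (A : Matrix (Fin n) (Fin n) R) (B : Matrix (Fin m) (Fin m) R)
    (α β : Fin n → Γ) (α' β' : Fin m → Γ) (C : Matrix (Fin m) (Fin n) R),
    (⟨n, A⟩ : SqMat R) ∈ Sig → (⟨m, B⟩ : SqMat R) ∈ Sig →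
    IsHomog 𝒜 A α β → IsHomog 𝒜 B α' β' → IsHomog 𝒜 C α' β →
    (⟨n + m, lowerBlockSum A B C⟩ : SqMat R) ∈ Sig

end GradedDefs

/-- A homomorphism of `Γ`-graded rings from `(R, 𝒜)` to a `Γ`-graded division ring. -/
structure GrDivRingHom (Γ : Type u) [Group Γ] [DecidableEq Γ] (R : Type v) [Ring R]
    (𝒜 : Γ → AddSubgroup R) where
  K : Type (max u v)
  [ringK : Ring K]
  [nontrivialK : Nontrivial K]
  grading : Γ → AddSubgroup K
  internal : DirectSum.IsInternal grading
  one_mem : (1 : K) ∈ grading 1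
  mul_mem : ∀ {γ δ : Γ} {x y : K}, x ∈ grading γ → y ∈ grading δ → x * y ∈ grading (γ * δ)
  isUnit_of_ne : ∀ {γ : Γ} {x : K}, x ∈ grading γ → x ≠ 0 → IsUnit x
  φ : R →+* K
  map_mem : ∀ {γ : Γ} {r : R}, r ∈ 𝒜 γ → φ r ∈ grading γ

attribute [instance] GrDivRingHom.ringK GrDivRingHom.nontrivialK

section Helpers

variable {Γ : Type u} [Group Γ] {R : Type v} [Ring R] {𝒜 : Γ → AddSubgroup R}

@[simp] lemma diagSum_apply_ll {m n m' n' : ℕ} (A : Matrix (Fin m) (Fin n) R)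
    (B : Matrix (Fin m') (Fin n') R) (i : Fin m) (j : Fin n) :
    diagSum A B (Fin.castAdd m' i) (Fin.castAdd n' j) = A i j := by
  simp [diagSum, Matrix.reindex_apply, Matrix.submatrix_apply,
    finSumFinEquiv_symm_apply_castAdd, finSumFinEquiv_symm_apply_natAdd]

@[simp] lemma diagSum_apply_lr {m n m' n' : ℕ} (A : Matrix (Fin m) (Fin n) R)
    (B : Matrix (Fin m') (Fin n') R) (i : Fin m) (j : Fin n') :
    diagSum A B (Fin.castAdd m' i) (Fin.natAdd n j) = 0 := by
  simp [diagSum, Matrix.reindex_apply, Matrix.submatrix_apply,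
    finSumFinEquiv_symm_apply_castAdd, finSumFinEquiv_symm_apply_natAdd]

@[simp] lemma diagSum_apply_rl {m n m' n' : ℕ} (A : Matrix (Fin m) (Fin n) R)
    (B : Matrix (Fin m') (Fin n') R) (i : Fin m') (j : Fin n) :
    diagSum A B (Fin.natAdd m i) (Fin.castAdd n' j) = 0 := by
  simp [diagSum, Matrix.reindex_apply, Matrix.submatrix_apply,
    finSumFinEquiv_symm_apply_castAdd, finSumFinEquiv_symm_apply_natAdd]

@[simp] lemma diagSum_apply_rr {m n m' n' : ℕ} (A : Matrix (Fin m) (Fin n) R)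
    (B : Matrix (Fin m') (Fin n') R) (i : Fin m') (j : Fin n') :
    diagSum A B (Fin.natAdd m i) (Fin.natAdd n j) = B i j := by
  simp [diagSum, Matrix.reindex_apply, Matrix.submatrix_apply,
    finSumFinEquiv_symm_apply_castAdd, finSumFinEquiv_symm_apply_natAdd]

lemma one_mem_self (hone : (1 : R) ∈ 𝒜 1) (γ : Γ) : (1 : R) ∈ 𝒜 (γ * γ⁻¹) := by
  rw [mul_inv_cancel]; exact hone

lemma isHomog_one {m : ℕ} (hone : (1 : R) ∈ 𝒜 1) (γ : Fin m → Γ) :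
    IsHomog 𝒜 (1 : Matrix (Fin m) (Fin m) R) γ γ := by
  intro i j
  rw [Matrix.one_apply]
  split
  · next h => subst h; exact one_mem_self hone _
  · exact zero_mem _

lemma isHomogSq_one {m : ℕ} (hone : (1 : R) ∈ 𝒜 1) :
    IsHomogSq 𝒜 (1 : Matrix (Fin m) (Fin m) R) :=
  ⟨fun _ => 1, fun _ => 1, isHomog_one hone _⟩

lemma isHomog_diagSum {m n m' n' : ℕ} {A : Matrix (Fin m) (Fin n) R}
    {B : Matrix (Fin m') (Fin n') R} {α β α' β'}
    (hA : IsHomog 𝒜 A α β) (hB : IsHomog 𝒜 B α' β') :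
    IsHomog 𝒜 (diagSum A B) (Fin.append α α') (Fin.append β β') := by
  intro i j
  induction i using Fin.addCases with
  | left i =>
    induction j using Fin.addCases with
    | left j => simpa [Fin.append_left] using hA i j
    | right j => simp [Fin.append_left, Fin.append_right]
  | right i =>
    induction j using Fin.addCases with
    | left j => simp [Fin.append_left, Fin.append_right]
    | right j => simpa [Fin.append_right] using hB i j

lemma isHomogSq_diagSum {m n m' n' : ℕ} {A : Matrix (Fin m) (Fin n) R}
    {B : Matrix (Fin m') (Fin n') R}
    (hA : IsHomogSq 𝒜 A) (hB : IsHomogSq 𝒜 B) : IsHomogSq 𝒜 (diagSum A B) := by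
  obtain ⟨α, β, hA⟩ := hA; obtain ⟨α', β', hB⟩ := hB
  exact ⟨_, _, isHomog_diagSum hA hB⟩

lemma isHomog_submatrix {m n m' n' : ℕ} {A : Matrix (Fin m) (Fin n) R} {α β}
    (hA : IsHomog 𝒜 A α β) (e : Fin m' → Fin m) (f : Fin n' → Fin n) :
    IsHomog 𝒜 (A.submatrix e f) (α ∘ e) (β ∘ f) := fun i j => hA (e i) (f j)

lemma diagSum_mul {m n k m' n' k' : ℕ} (A : Matrix (Fin m) (Fin n) R)
    (B : Matrix (Fin n) (Fin k) R) (A' : Matrix (Fin m') (Fin n') R)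
    (B' : Matrix (Fin n') (Fin k') R) :
    diagSum A A' * diagSum B B' = diagSum (A * B) (A' * B') := by
  simp only [diagSum, Matrix.reindex_apply]
  rw [Matrix.submatrix_mul_equiv _ _ _ finSumFinEquiv.symm _]
  rw [Matrix.fromBlocks_multiply]
  simp

end Helpers

section Helpers2

variable {Γ : Type u} [Group Γ] {R : Type v} [Ring R] {𝒜 : Γ → AddSubgroup R}

lemma natAdd_ne_castAdd {n k : ℕ} (i : Fin k) (j : Fin n) :
    Fin.natAdd n i ≠ Fin.castAdd k j := by
  intro h
  have h2 : n + (i : ℕ) = (j : ℕ) := by simpa using congrArg Fin.val h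
  have := j.isLt
  omega

lemma not_grFull_diagSum {n k : ℕ} {A : Matrix (Fin n) (Fin n) R}
    {B : Matrix (Fin k) (Fin k) R} (hone : (1 : R) ∈ 𝒜 1)
    (hA : ¬ IsGrFull 𝒜 A) (hB : IsHomogSq 𝒜 B) : ¬ IsGrFull 𝒜 (diagSum A B) := by
  unfold IsGrFull at hA ⊢
  push_neg at hA ⊢
  obtain ⟨r, P, Q, α, lam, β, hP, hQ, hPQ, hr⟩ := hA
  obtain ⟨α', β', hB⟩ := hB
  refine ⟨r + k, diagSum P B, diagSum Q (1 : Matrix (Fin k) (Fin k) R),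
    Fin.append α α', Fin.append lam β', Fin.append β β',
    isHomog_diagSum hP hB, isHomog_diagSum hQ (isHomog_one hone β'), ?_, by omega⟩
  rw [diagSum_mul, ← hPQ, mul_one]

lemma not_grFull_submatrix {m n : ℕ} {A : Matrix (Fin n) (Fin n) R}
    (e f : Fin m ≃ Fin n) (hA : ¬ IsGrFull 𝒜 A) :
    ¬ IsGrFull 𝒜 (A.submatrix ⇑e ⇑f) := by
  have hmn : m = n := by simpa using Fintype.card_congr e
  unfold IsGrFull at hA ⊢
  push_neg at hA ⊢
  obtain ⟨r, P, Q, α, lam, β, hP, hQ, hPQ, hr⟩ := hA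
  refine ⟨r, P.submatrix ⇑e _root_.id, Q.submatrix _root_.id ⇑f,
    α ∘ ⇑e, lam, β ∘ ⇑f, isHomog_submatrix hP _ _, isHomog_submatrix hQ _ _, ?_, by omega⟩
  have : P.submatrix ⇑e ⇑(Equiv.refl (Fin r)) * Q.submatrix ⇑(Equiv.refl (Fin r)) ⇑f
      = (P * Q).submatrix ⇑e ⇑f := Matrix.submatrix_mul_equiv P Q ⇑e (Equiv.refl (Fin r)) ⇑f
  simpa using by rw [← hPQ] at this; exact this.symm

lemma isDetSum_pad {n k : ℕ} {A B C : Matrix (Fin n) (Fin n) R}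
    (X : Matrix (Fin k) (Fin k) R) (h : IsDetSum A B C) :
    IsDetSum (diagSum A X) (diagSum B X) (diagSum C X) := by
  rcases h with ⟨c, hag, hsum⟩ | ⟨r, hag, hsum⟩
  · left
    refine ⟨Fin.castAdd k c, ?_, ?_⟩
    · intro i j hj
      induction i using Fin.addCases with
      | left i =>
        induction j using Fin.addCases with
        | left j =>
          simp only [diagSum_apply_ll]
          exact hag i j fun h => hj (by rw [h])
        | right j => simp
      | right i =>
        induction j using Fin.addCases with
        | left j => simp
        | right j => simp
    · intro i j
      induction j using Fin.addCases with
      | left j =>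
        simp only [Fin.castAdd_inj]
        induction i using Fin.addCases with
        | left i =>
          simp only [diagSum_apply_ll]
          rw [hsum i j]
        | right i => simp only [diagSum_apply_rl]; split <;> simp
      | right j =>
        rw [if_neg (natAdd_ne_castAdd j c)]
        induction i using Fin.addCases with
        | left i => simp
        | right i => simp
  · right
    refine ⟨Fin.castAdd k r, ?_, ?_⟩
    · intro i j hi
      induction j using Fin.addCases with
      | left j =>
        induction i using Fin.addCases with
        | left i =>
          simp only [diagSum_apply_ll]
          exact hag i j fun h => hi (by rw [h])
        | right i => simp
      | right j =>
        induction i using Fin.addCases with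
        | left i => simp
        | right i => simp
    · intro i j
      induction i using Fin.addCases with
      | left i =>
        simp only [Fin.castAdd_inj]
        induction j using Fin.addCases with
        | left j =>
          simp only [diagSum_apply_ll]
          rw [hsum i j]
        | right j => simp only [diagSum_apply_lr]; split <;> simp
      | right i =>
        rw [if_neg (natAdd_ne_castAdd i r)]
        induction j using Fin.addCases with
        | left j => simp
        | right j => simp

lemma isDetSum_submatrix {m n : ℕ} {A B C : Matrix (Fin n) (Fin n) R}
    (e f : Fin m ≃ Fin n) (h : IsDetSum A B C) :
    IsDetSum (A.submatrix ⇑e ⇑f) (B.submatrix ⇑e ⇑f) (C.submatrix ⇑e ⇑f) := by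
  rcases h with ⟨c, hag, hsum⟩ | ⟨r, hag, hsum⟩
  · left
    refine ⟨f.symm c, fun i j hj => hag (e i) (f j) (fun h => hj (by simp [← h])), ?_⟩
    intro i j
    simp only [Matrix.submatrix_apply]
    rw [hsum (e i) (f j)]
    by_cases hc : j = f.symm c
    · rw [if_pos hc, if_pos (by simp [hc])]
    · rw [if_neg hc, if_neg (fun h => hc (by simp [← h]))]
  · right
    refine ⟨e.symm r, fun i j hi => hag (e i) (f j) (fun h => hi (by simp [← h])), ?_⟩
    intro i j
    simp only [Matrix.submatrix_apply]
    rw [hsum (e i) (f j)]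
    by_cases hc : i = e.symm r
    · rw [if_pos hc, if_pos (by simp [hc])]
    · rw [if_neg hc, if_neg (fun h => hc (by simp [← h]))]

lemma grDetSum_pad {n k : ℕ} {A B C : Matrix (Fin n) (Fin n) R}
    {X : Matrix (Fin k) (Fin k) R} (hX : IsHomogSq 𝒜 X)
    (h : GrDetSum 𝒜 A B C) :
    GrDetSum 𝒜 (diagSum A X) (diagSum B X) (diagSum C X) := by
  obtain ⟨⟨α, β, hA, hB⟩, hd⟩ := h
  obtain ⟨α', β', hX⟩ := hX
  exact ⟨⟨_, _, isHomog_diagSum hA hX, isHomog_diagSum hB hX⟩, isDetSum_pad X hd⟩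

lemma grDetSum_submatrix {m n : ℕ} {A B C : Matrix (Fin n) (Fin n) R}
    (e f : Fin m ≃ Fin n) (h : GrDetSum 𝒜 A B C) :
    GrDetSum 𝒜 (A.submatrix ⇑e ⇑f) (B.submatrix ⇑e ⇑f) (C.submatrix ⇑e ⇑f) := by
  obtain ⟨⟨α, β, hA, hB⟩, hd⟩ := h
  exact ⟨⟨_, _, isHomog_submatrix hA _ _, isHomog_submatrix hB _ _⟩,
    isDetSum_submatrix e f hd⟩

lemma grDetSum_homog {n : ℕ} {A B C : Matrix (Fin n) (Fin n) R}
    (h : GrDetSum 𝒜 A B C) : IsHomogSq 𝒜 C := by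
  obtain ⟨⟨α, β, hA, hB⟩, hd⟩ := h
  refine ⟨α, β, fun i j => ?_⟩
  rcases hd with ⟨c, _, hsum⟩ | ⟨r, _, hsum⟩ <;> rw [hsum i j] <;> split
  · exact add_mem (hA i j) (hB i j)
  · exact hA i j
  · exact add_mem (hA i j) (hB i j)
  · exact hA i j

end Helpers2

section Helpers3

variable {R : Type v} [Ring R]

/-- Block sum of two `Fin` equivalences. -/
def sumFinEquiv {a b c d : ℕ} (e : Fin a ≃ Fin c) (f : Fin b ≃ Fin d) :
    Fin (a + b) ≃ Fin (c + d) :=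
  finSumFinEquiv.symm.trans ((e.sumCongr f).trans finSumFinEquiv)

@[simp] lemma sumFinEquiv_castAdd {a b c d : ℕ} (e : Fin a ≃ Fin c) (f : Fin b ≃ Fin d)
    (i : Fin a) : sumFinEquiv e f (Fin.castAdd b i) = Fin.castAdd d (e i) := by
  simp [sumFinEquiv]

@[simp] lemma sumFinEquiv_natAdd {a b c d : ℕ} (e : Fin a ≃ Fin c) (f : Fin b ≃ Fin d)
    (i : Fin b) : sumFinEquiv e f (Fin.natAdd a i) = Fin.natAdd c (f i) := by
  simp [sumFinEquiv]

/-- The block-swap equivalence. -/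
def commFinEquiv {a b : ℕ} : Fin (a + b) ≃ Fin (b + a) :=
  finSumFinEquiv.symm.trans ((Equiv.sumComm (Fin a) (Fin b)).trans finSumFinEquiv)

@[simp] lemma commFinEquiv_castAdd {a b : ℕ} (i : Fin a) :
    commFinEquiv (Fin.castAdd b i) = Fin.natAdd b i := by
  simp [commFinEquiv]

@[simp] lemma commFinEquiv_natAdd {a b : ℕ} (i : Fin b) :
    commFinEquiv (Fin.natAdd a i) = Fin.castAdd a i := by
  simp [commFinEquiv]

lemma submatrix_equiv_inv {m n m' n' : ℕ} {X : Matrix (Fin m) (Fin n) R}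
    {Y : Matrix (Fin m') (Fin n') R} (e : Fin m' ≃ Fin m) (f : Fin n' ≃ Fin n)
    (h : Y = X.submatrix ⇑e ⇑f) : X = Y.submatrix ⇑e.symm ⇑f.symm := by
  subst h
  rw [Matrix.submatrix_submatrix]
  simp [Equiv.self_comp_symm]

lemma diagSum_one_one {a b : ℕ} :
    diagSum (1 : Matrix (Fin a) (Fin a) R) (1 : Matrix (Fin b) (Fin b) R)
      = (1 : Matrix (Fin (a + b)) (Fin (a + b)) R) := by
  ext i j
  induction i using Fin.addCases with
  | left i =>
    induction j using Fin.addCases with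
    | left j =>
      rw [diagSum_apply_ll]
      by_cases h : i = j
      · subst h; simp
      · rw [Matrix.one_apply_ne h, Matrix.one_apply_ne (by simpa [Fin.castAdd_inj] using h)]
    | right j =>
      rw [diagSum_apply_lr, Matrix.one_apply_ne (fun h => natAdd_ne_castAdd j i h.symm)]
  | right i =>
    induction j using Fin.addCases with
    | left j => rw [diagSum_apply_rl, Matrix.one_apply_ne (natAdd_ne_castAdd i j)]
    | right j =>
      rw [diagSum_apply_rr]
      by_cases h : i = j
      · subst h; simp
      · rw [Matrix.one_apply_ne h,
          Matrix.one_apply_ne (by simp [Fin.ext_iff] at h ⊢; omega)]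

lemma diagSum_comm {a b : ℕ} (X : Matrix (Fin a) (Fin a) R) (Y : Matrix (Fin b) (Fin b) R) :
    diagSum Y X = (diagSum X Y).submatrix ⇑(commFinEquiv (a := b) (b := a))
      ⇑(commFinEquiv (a := b) (b := a)) := by
  ext i j
  induction i using Fin.addCases with
  | left i =>
    induction j using Fin.addCases with
    | left j => simp
    | right j => simp
  | right i =>
    induction j using Fin.addCases with
    | left j => simp
    | right j => simp

lemma diagSum_submatrix {a b c d : ℕ} (e : Fin a ≃ Fin c) (f : Fin a ≃ Fin c)
    (e' : Fin b ≃ Fin d) (f' : Fin b ≃ Fin d)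
    (X : Matrix (Fin c) (Fin c) R) (Y : Matrix (Fin d) (Fin d) R) :
    diagSum (X.submatrix ⇑e ⇑f) (Y.submatrix ⇑e' ⇑f')
      = (diagSum X Y).submatrix ⇑(sumFinEquiv e e') ⇑(sumFinEquiv f f') := by
  ext i j
  induction i using Fin.addCases with
  | left i =>
    induction j using Fin.addCases with
    | left j => simp
    | right j => simp
  | right i =>
    induction j using Fin.addCases with
    | left j => simp
    | right j => simp

lemma diagSum_submatrix_right {n m m' : ℕ} (X : Matrix (Fin n) (Fin n) R)
    (Q : Matrix (Fin m) (Fin m) R) (c : Fin m' ≃ Fin m) (c' : Fin m' ≃ Fin m) :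
    diagSum X (Q.submatrix ⇑c ⇑c')
      = (diagSum X Q).submatrix ⇑(sumFinEquiv (Equiv.refl (Fin n)) c)
          ⇑(sumFinEquiv (Equiv.refl (Fin n)) c') := by
  have := diagSum_submatrix (Equiv.refl (Fin n)) (Equiv.refl (Fin n)) c c' X Q
  simpa using this

lemma diagSum_submatrix_left {n n' m : ℕ} (e f : Fin n' ≃ Fin n)
    (X : Matrix (Fin n) (Fin n) R) (Y : Matrix (Fin m) (Fin m) R) :
    diagSum (X.submatrix ⇑e ⇑f) Y
      = (diagSum X Y).submatrix ⇑(sumFinEquiv e (Equiv.refl (Fin m)))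
          ⇑(sumFinEquiv f (Equiv.refl (Fin m))) := by
  have := diagSum_submatrix e f (Equiv.refl (Fin m)) (Equiv.refl (Fin m)) X Y
  simpa using this

lemma diagSum_assoc {a b c : ℕ} (X : Matrix (Fin a) (Fin a) R)
    (Y : Matrix (Fin b) (Fin b) R) (Z : Matrix (Fin c) (Fin c) R) :
    diagSum (diagSum X Y) Z
      = (diagSum X (diagSum Y Z)).submatrix ⇑(finCongr (add_assoc a b c))
          ⇑(finCongr (add_assoc a b c)) := by
  have n1 : ∀ i : Fin a, (finCongr (add_assoc a b c)) (Fin.castAdd c (Fin.castAdd b i))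
      = Fin.castAdd (b + c) i := fun i => by
    apply Fin.ext; simp
  have n2 : ∀ i : Fin b, (finCongr (add_assoc a b c)) (Fin.castAdd c (Fin.natAdd a i))
      = Fin.natAdd a (Fin.castAdd c i) := fun i => by
    apply Fin.ext; simp
  have n3 : ∀ i : Fin c, (finCongr (add_assoc a b c)) (Fin.natAdd (a + b) i)
      = Fin.natAdd a (Fin.natAdd b i) := fun i => by
    apply Fin.ext; simp; omega
  ext i j
  rw [Matrix.submatrix_apply]
  induction i using Fin.addCases with
  | left i =>
    induction i using Fin.addCases with
    | left i =>
      rw [n1]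
      induction j using Fin.addCases with
      | left j =>
        induction j using Fin.addCases with
        | left j => rw [n1]; simp
        | right j => rw [n2]; simp
      | right j => rw [n3]; simp
    | right i =>
      rw [n2]
      induction j using Fin.addCases with
      | left j =>
        induction j using Fin.addCases with
        | left j => rw [n1]; simp
        | right j => rw [n2]; simp
      | right j => rw [n3]; simp
  | right i =>
    rw [n3]
    induction j using Fin.addCases with
    | left j =>
      induction j using Fin.addCases with
      | left j => rw [n1]; simp
      | right j => rw [n2]; simp
    | right j => rw [n3]; simp

lemma diagSum_assoc' {a b c : ℕ} (X : Matrix (Fin a) (Fin a) R)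
    (Y : Matrix (Fin b) (Fin b) R) (Z : Matrix (Fin c) (Fin c) R) :
    diagSum X (diagSum Y Z)
      = (diagSum (diagSum X Y) Z).submatrix ⇑(finCongr (add_assoc a b c)).symm
          ⇑(finCongr (add_assoc a b c)).symm :=
  submatrix_equiv_inv _ _ (diagSum_assoc X Y Z)

lemma diagSum_one_cast {n a b : ℕ} (h : a = b) (X : Matrix (Fin n) (Fin n) R) :
    diagSum X (1 : Matrix (Fin a) (Fin a) R)
      = (diagSum X (1 : Matrix (Fin b) (Fin b) R)).submatrix
          ⇑(finCongr (by rw [h])) ⇑(finCongr (by rw [h] : n + a = n + b)) := by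
  subst h
  simp [finCongr_refl]

end Helpers3

section Helpers4

variable {Γ : Type u} [Group Γ] {R : Type v} [Ring R] {𝒜 : Γ → AddSubgroup R}
variable {N : Set (SqMat R)}

lemma D_pad_right (hone : (1 : R) ∈ 𝒜 1)
    (hN : N = {p : SqMat R | IsHomogSq 𝒜 p.2 ∧ ¬ IsGrFull 𝒜 p.2})
    {k : ℕ} {B : Matrix (Fin k) (Fin k) R} (hB : IsHomogSq 𝒜 B)
    {p : SqMat R} (h : IsDetSumOf 𝒜 N p) :
    IsDetSumOf 𝒜 N ⟨p.1 + k, diagSum p.2 B⟩ := by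
  induction h with
  | base p hp =>
    obtain ⟨n, W⟩ := p
    rw [hN] at hp
    refine IsDetSumOf.base _ ?_
    rw [hN]
    exact ⟨isHomogSq_diagSum hp.1 hB, not_grFull_diagSum hone hp.2 hB⟩
  | step A B' C hA hB' hdet ihA ihB' =>
    exact IsDetSumOf.step _ _ _ ihA ihB' (grDetSum_pad hB hdet)

lemma D_reindex (hN : N = {p : SqMat R | IsHomogSq 𝒜 p.2 ∧ ¬ IsGrFull 𝒜 p.2})
    {p : SqMat R} (h : IsDetSumOf 𝒜 N p) :
    ∀ {m : ℕ} (e f : Fin m ≃ Fin p.1),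
      IsDetSumOf 𝒜 N ⟨m, p.2.submatrix ⇑e ⇑f⟩ := by
  induction h with
  | base p hp =>
    obtain ⟨n, W⟩ := p
    intro m e f
    rw [hN] at hp
    refine IsDetSumOf.base _ ?_
    rw [hN]
    obtain ⟨⟨α, β, hW⟩, hnf⟩ := hp
    exact ⟨⟨_, _, isHomog_submatrix hW _ _⟩, not_grFull_submatrix e f hnf⟩
  | step A B' C hA hB' hdet ihA ihB' =>
    intro m e f
    exact IsDetSumOf.step _ _ _ (ihA e f) (ihB' e f) (grDetSum_submatrix e f hdet)

lemma D_mem_ideal {J : Set (SqMat R)} (hJ : IsGrMatrixIdeal 𝒜 J)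
    (hN : N = {p : SqMat R | IsHomogSq 𝒜 p.2 ∧ ¬ IsGrFull 𝒜 p.2})
    {p : SqMat R} (h : IsDetSumOf 𝒜 N p) : p ∈ J := by
  induction h with
  | base p hp =>
    obtain ⟨n, W⟩ := p
    rw [hN] at hp
    exact hJ.i1 W hp.1 hp.2
  | step A B' C hA hB' hdet ihA ihB' =>
    exact hJ.i2 A B' C ihA ihB' hdet

lemma diagSum_one_zero {n : ℕ} (A : Matrix (Fin n) (Fin n) R) :
    diagSum A (1 : Matrix (Fin 0) (Fin 0) R) = A := by
  ext i j
  have hi : i = Fin.castAdd 0 ⟨i.1, by omega⟩ := Fin.ext rfl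
  have hj : j = Fin.castAdd 0 ⟨j.1, by omega⟩ := Fin.ext rfl
  conv_lhs => rw [hi, hj]
  rw [diagSum_apply_ll]
  congr 1 <;> exact Fin.ext rfl

lemma J_reindex {J : Set (SqMat R)} (hJ : IsGrMatrixIdeal 𝒜 J)
    {n m : ℕ} (e f : Fin m ≃ Fin n) (X : Matrix (Fin n) (Fin n) R)
    (h : (⟨n, X⟩ : SqMat R) ∈ J) : (⟨m, X.submatrix ⇑e ⇑f⟩ : SqMat R) ∈ J := by
  have hm : m = n := by simpa using Fintype.card_congr e
  subst hm
  exact hJ.i4 X e f h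

lemma J_peel {J : Set (SqMat R)} (hJ : IsGrMatrixIdeal 𝒜 J) :
    ∀ (m : ℕ) {n : ℕ} (A : Matrix (Fin n) (Fin n) R),
      (⟨n + m, diagSum A (1 : Matrix (Fin m) (Fin m) R)⟩ : SqMat R) ∈ J →
      (⟨n, A⟩ : SqMat R) ∈ J := by
  intro m
  induction m with
  | zero =>
    intro n A h
    rw [diagSum_one_zero A] at h
    exact h
  | succ m ih =>
    intro n A h
    refine ih A (hJ.i5 (diagSum A (1 : Matrix (Fin m) (Fin m) R)) ?_)
    have hass := diagSum_assoc A (1 : Matrix (Fin m) (Fin m) R)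
      (1 : Matrix (Fin 1) (Fin 1) R)
    have hid : ⇑(finCongr (add_assoc n m 1)) = _root_.id := funext fun _ => rfl
    rw [hid, Matrix.submatrix_id_id, diagSum_one_one] at hass
    rw [hass]
    exact h

end Helpers4

section Helpers5

variable {Γ : Type u} [Group Γ] {R : Type v} [Ring R] {𝒜 : Γ → AddSubgroup R}
variable {N : Set (SqMat R)}

lemma D_cast_one (hN : N = {p : SqMat R | IsHomogSq 𝒜 p.2 ∧ ¬ IsGrFull 𝒜 p.2})
    {n a b : ℕ} (h : a = b) {A : Matrix (Fin n) (Fin n) R}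
    (hD : IsDetSumOf 𝒜 N ⟨n + a, diagSum A (1 : Matrix (Fin a) (Fin a) R)⟩) :
    IsDetSumOf 𝒜 N ⟨n + b, diagSum A (1 : Matrix (Fin b) (Fin b) R)⟩ := by
  subst h; exact hD

lemma D_pad_one (hone : (1 : R) ∈ 𝒜 1)
    (hN : N = {p : SqMat R | IsHomogSq 𝒜 p.2 ∧ ¬ IsGrFull 𝒜 p.2})
    {n p : ℕ} {A : Matrix (Fin n) (Fin n) R}
    (h : IsDetSumOf 𝒜 N ⟨n + p, diagSum A (1 : Matrix (Fin p) (Fin p) R)⟩) (q : ℕ) :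
    IsDetSumOf 𝒜 N ⟨n + (p + q), diagSum A (1 : Matrix (Fin (p + q)) (Fin (p + q)) R)⟩ := by
  have h2 := D_pad_right hone hN (isHomogSq_one hone (m := q)) h
  have h3 := D_reindex hN h2 (finCongr (add_assoc n p q)).symm (finCongr (add_assoc n p q)).symm
  rw [← diagSum_assoc', diagSum_one_one] at h3
  exact h3

end Helpers5

/-- Let `N` be the set of square homogeneous matrices over the
`Γ`-graded ring `R` which are not gr-full, and let
`L = {A ∈ 𝔐(R) : A ⊕ I_m is an iterated determinantal sum of elements of N for some m ≥ 0}`.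
Then `L` is a gr-matrix ideal contained in every gr-matrix ideal of `R` (the least
gr-matrix ideal).  Consequently `R` possesses a proper gr-matrix ideal if and only
if no identity matrix can be expressed as an iterated determinantal sum of elements
of `N`. -/
theorem least_gr_matrix_ideal
    {Γ : Type u} [Group Γ] [DecidableEq Γ] {R : Type v} [Ring R]
    (𝒜 : Γ → AddSubgroup R)
    (hinternal : DirectSum.IsInternal 𝒜)
    (hone : (1 : R) ∈ 𝒜 1)
    (hmul : ∀ {γ δ : Γ} {x y : R}, x ∈ 𝒜 γ → y ∈ 𝒜 δ → x * y ∈ 𝒜 (γ * δ))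
    (N L : Set (SqMat R))
    (hN : N = {p : SqMat R | IsHomogSq 𝒜 p.2 ∧ ¬ IsGrFull 𝒜 p.2})
    (hL : L = {p : SqMat R | IsHomogSq 𝒜 p.2 ∧
        ∃ m : ℕ, IsDetSumOf 𝒜 N
          (⟨p.1 + m, diagSum p.2 (1 : Matrix (Fin m) (Fin m) R)⟩ : SqMat R)}) :
    IsGrMatrixIdeal 𝒜 L ∧
    (∀ J : Set (SqMat R), IsGrMatrixIdeal 𝒜 J → L ⊆ J) ∧
    ((∃ J : Set (SqMat R), IsGrMatrixIdeal 𝒜 J ∧ J ≠ {p : SqMat R | IsHomogSq 𝒜 p.2}) ↔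
      ∀ n : ℕ, ¬ IsDetSumOf 𝒜 N (⟨n, (1 : Matrix (Fin n) (Fin n) R)⟩ : SqMat R)) := by
  have hIdeal : IsGrMatrixIdeal 𝒜 L := by
    constructor
    · intro p hp
      rw [hL] at hp
      exact hp.1
    · -- i1
      intro n A hhom hnf
      rw [hL]
      exact ⟨hhom, 0,
        D_pad_right hone hN (isHomogSq_one hone)
          (IsDetSumOf.base _ (by rw [hN]; exact ⟨hhom, hnf⟩))⟩
    · -- i2
      intro n A B C hA hB hgd
      rw [hL] at hA hB ⊢
      obtain ⟨hAh, p, hDA⟩ := hA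
      obtain ⟨hBh, q, hDB⟩ := hB
      refine ⟨grDetSum_homog hgd, p + q, ?_⟩
      have hA3 := D_pad_one hone hN hDA q
      have hB3 := D_cast_one hN (add_comm q p) (D_pad_one hone hN hDB p)
      exact IsDetSumOf.step _ _ _ hA3 hB3
        (grDetSum_pad (isHomogSq_one hone) hgd)
    · -- i3
      intro m n A B hA hBh
      rw [hL] at hA ⊢
      obtain ⟨hAh, p, hDA⟩ := hA
      refine ⟨isHomogSq_diagSum hAh hBh, p, ?_⟩
      have h1 := D_pad_right hone hN hBh hDA
      have h2 := D_reindex hN h1 (finCongr (add_assoc m p n)).symm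
        (finCongr (add_assoc m p n)).symm
      rw [← diagSum_assoc'] at h2
      have h3 := D_reindex hN h2
        (sumFinEquiv (Equiv.refl (Fin m)) (commFinEquiv (a := n) (b := p)))
        (sumFinEquiv (Equiv.refl (Fin m)) (commFinEquiv (a := n) (b := p)))
      rw [← diagSum_submatrix_right, ← diagSum_comm] at h3
      have h4 := D_reindex hN h3 (finCongr (add_assoc m n p)) (finCongr (add_assoc m n p))
      rw [← diagSum_assoc] at h4
      exact h4
    · -- i4
      intro n A e f hA
      rw [hL] at hA ⊢
      obtain ⟨hAh, p, hDA⟩ := hA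
      obtain ⟨α, β, hh⟩ := hAh
      refine ⟨⟨_, _, isHomog_submatrix hh ⇑e ⇑f⟩, p, ?_⟩
      have h1 := D_reindex hN hDA (sumFinEquiv e (Equiv.refl (Fin p)))
        (sumFinEquiv f (Equiv.refl (Fin p)))
      rw [← diagSum_submatrix_left] at h1
      exact h1
    · -- i5
      intro n A h
      rw [hL] at h ⊢
      obtain ⟨hh, m, hD⟩ := h
      obtain ⟨α, β, hhom⟩ := hh
      have hAhom : IsHomog 𝒜 A (α ∘ Fin.castAdd 1) (β ∘ Fin.castAdd 1) := by
        intro i j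
        have := hhom (Fin.castAdd 1 i) (Fin.castAdd 1 j)
        change diagSum A (1 : Matrix (Fin 1) (Fin 1) R) (Fin.castAdd 1 i)
          (Fin.castAdd 1 j) ∈ _ at this
        rwa [diagSum_apply_ll] at this
      refine ⟨⟨_, _, hAhom⟩, 1 + m, ?_⟩
      have h2 := D_reindex hN hD (finCongr (add_assoc n 1 m)).symm
        (finCongr (add_assoc n 1 m)).symm
      rw [← diagSum_assoc', diagSum_one_one] at h2
      exact h2
  have hLeast : ∀ J : Set (SqMat R), IsGrMatrixIdeal 𝒜 J → L ⊆ J := by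
    intro J hJ p hp
    rw [hL] at hp
    obtain ⟨hh, m, hD⟩ := hp
    exact J_peel hJ m p.2 (D_mem_ideal hJ hN hD)
  refine ⟨hIdeal, hLeast, ?_, ?_⟩
  · rintro ⟨J, hJ, hJne⟩ n hD
    apply hJne
    apply Set.Subset.antisymm
    · intro p hp
      exact hJ.subset_homog p hp
    · rintro ⟨k, A⟩ hA
      have hI : (⟨n, (1 : Matrix (Fin n) (Fin n) R)⟩ : SqMat R) ∈ J :=
        D_mem_ideal hJ hN hD
      have h2 := hJ.i3 _ A hI hA
      have h3 := J_reindex hJ (commFinEquiv (a := k) (b := n))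
        (commFinEquiv (a := k) (b := n)) _ h2
      rw [← diagSum_comm] at h3
      exact J_peel hJ n A h3
  · intro hno
    refine ⟨L, hIdeal, ?_⟩
    intro heq
    have h1 : (⟨1, (1 : Matrix (Fin 1) (Fin 1) R)⟩ : SqMat R) ∈ L := by
      rw [heq]
      exact isHomogSq_one hone
    rw [hL] at h1
    obtain ⟨-, m, hD⟩ := h1
    rw [diagSum_one_one] at hD
    exact hno (1 + m) hD
end

section
/- Let Γ be a group, R a Γ-graded ring, and let (K_1, φ_1) and (K_2, φ_2) be Γ-graded epic R-division rings. If {A ∈ 𝔐(R) : A^{φ_1} is invertible over K_1} = {A ∈ 𝔐(R) : A^{φ_2} is invertible over K_2}, then there exists an isomorphism of Γ-graded rings ψ : K_1 → K_2 (a ring isomorphism with ψ((K_1)_γ) = (K_2)_γ for all γ ∈ Γ) such that ψ ∘ φ_1 = φ_2. -/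
open Matrix

universe u v w

/-!
Over `K₁ × K₂`, an element of `RatCl 𝒜 Set.univ (φ₁.prod φ₂) γ` is a pair of entries in the same
position of the inverses of `A^φ₁` and `A^φ₂`, for one homogeneous matrix `A` over `R`.
Block triangular matrices show that these pairs are closed under sums and products and contain
the image of `R`, and bordering `A` by unit vectors shows that such a pair, once invertible, has
its inverse of the same kind. The hypothesis on inverting sets, applied to the bordered matrix,
shows that the first entry of such a pair vanishes iff the second does. Hence the pairs in
`K₁ × K₂` all of whose homogeneous components are of this kind form a subring containing the
image of `R` on which both projections are injective, and, by epicness, surjective. This subring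
is the graph of the required isomorphism.
-/

open DirectSum

namespace DirectSum

variable {Γ : Type u} [DecidableEq Γ] {K : Type w} [Ring K]
  (g : Γ → AddSubgroup K) [Decomposition g]

theorem decompose_eq_zero_iff {x : K} : x = 0 ↔ ∀ γ, (decompose g x γ : K) = 0 := by
  rw [← (decomposeAddEquiv g).map_eq_zero_iff, DFinsupp.ext_iff]
  simp

theorem mem_iff_decompose_eq_zero {x : K} {γ : Γ} :
    x ∈ g γ ↔ ∀ δ, δ ≠ γ → (decompose g x δ : K) = 0 := by
  refine ⟨fun hx δ hδ => decompose_of_mem_ne g hx hδ.symm, fun h => ?_⟩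
  have hx : decompose g x = of (fun γ => g γ) γ (decompose g x γ) := by
    ext δ
    by_cases hδ : δ = γ
    · subst hδ; simp
    · rw [of_eq_of_ne _ _ _ hδ, h δ hδ]
      rfl
  rw [← (decompose g).symm_apply_apply x, hx, decompose_symm_of]
  exact (decompose g x γ).2

variable [Group Γ]

theorem decompose_mul_of_left_mem
    (hmul : ∀ {γ δ : Γ} {x y : K}, x ∈ g γ → y ∈ g δ → x * y ∈ g (γ * δ))
    {γ : Γ} {a : K} (ha : a ∈ g γ) (δ : Γ) (b : K) :
    (decompose g (a * b) (γ * δ) : K) = a * decompose g b δ := by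
  induction b using Decomposition.inductionOn g with
  | zero => simp
  | @homogeneous η b =>
    by_cases h : η = δ
    · subst h
      rw [decompose_of_mem_same g (hmul ha b.2), decompose_of_mem_same g b.2]
    · rw [decompose_of_mem_ne g (hmul ha b.2) (by simpa using h), decompose_of_mem_ne g b.2 h,
        mul_zero]
  | add b b' hb hb' => simp [mul_add, hb, hb']

theorem inverse_mem_of_homogeneous (hone : (1 : K) ∈ g 1)
    (hmul : ∀ {γ δ : Γ} {x y : K}, x ∈ g γ → y ∈ g δ → x * y ∈ g (γ * δ))
    {ι : Type*} [Fintype ι] [DecidableEq ι] {M N : Matrix ι ι K} {α β : ι → Γ}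
    (hM : ∀ i j, M i j ∈ g (α i * (β j)⁻¹)) (hMN : M * N = 1) (hNM : N * M = 1) (i j : ι) :
    N i j ∈ g (β i * (α j)⁻¹) := by
  set N' : Matrix ι ι K := Matrix.of fun i j => (decompose g (N i j) (β i * (α j)⁻¹) : K)
  have hone_mem : ∀ i k, (1 : Matrix ι ι K) i k ∈ g (α i * (α k)⁻¹) := by
    intro i k
    by_cases h : i = k
    · subst h; simpa using hone
    · simp [Matrix.one_apply_ne h]
  have hMN' : M * N' = 1 := by
    ext i k
    calc (M * N') i k = ∑ j, (decompose g (M i j * N j k) (α i * (α k)⁻¹) : K) := by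
          refine Finset.sum_congr rfl fun j _ => ?_
          rw [show α i * (α k)⁻¹ = α i * (β j)⁻¹ * (β j * (α k)⁻¹) by group,
            decompose_mul_of_left_mem g hmul (hM i j)]
          rfl
      _ = decompose g ((M * N) i k) (α i * (α k)⁻¹) := by simp [Matrix.mul_apply, decompose_sum]
      _ = (1 : Matrix ι ι K) i k := by rw [hMN, decompose_of_mem_same g (hone_mem i k)]
  have hN : N = N' := by
    rw [← Matrix.mul_one N, ← hMN', ← Matrix.mul_assoc, hNM, Matrix.one_mul]
  rw [hN]
  exact (decompose g _ _).2

end DirectSum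

namespace Matrix

variable {S : Type*} [Ring S] {m n : Type*} [Fintype m] [Fintype n] [DecidableEq m] [DecidableEq n]

theorem fromBlocks_zero₂₁_mul_eq_one {A B : Matrix m m S} {A' B' : Matrix n n S}
    (C : Matrix m n S) (hAB : A * B = 1) (hBA : B * A = 1) (hAB' : A' * B' = 1)
    (hBA' : B' * A' = 1) :
    fromBlocks A C 0 A' * fromBlocks B (-(B * C * B')) 0 B' = 1 ∧
      fromBlocks B (-(B * C * B')) 0 B' * fromBlocks A C 0 A' = 1 := by
  have eBA' : B * C * B' * A' = B * C := by rw [Matrix.mul_assoc _ B', hBA', Matrix.mul_one]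
  constructor <;>
  · rw [fromBlocks_multiply, ← fromBlocks_one]
    simp [← Matrix.mul_assoc, hAB, hBA, hAB', hBA', eBA']

/-- The Schur complement of `A` in `[[A, c], [r, 0]]` is `-(r * B * c)`. -/
theorem fromBlocks_zero₂₂_mul_eq_one {A B : Matrix m m S} {c : Matrix m n S}
    {r : Matrix n m S} {Y : Matrix n n S} (hAB : A * B = 1) (hBA : B * A = 1)
    (hY₁ : r * B * c * Y = 1) (hY₂ : Y * r * B * c = 1) :
    fromBlocks A c r 0 * fromBlocks (B - B * c * Y * r * B) (B * c * Y) (Y * r * B) (-Y) = 1 ∧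
      fromBlocks (B - B * c * Y * r * B) (B * c * Y) (Y * r * B) (-Y) * fromBlocks A c r 0 =
        1 := by
  have eBA : B * c * Y * r * B * A = B * c * Y * r := by
    rw [Matrix.mul_assoc _ B, hBA, Matrix.mul_one]
  have eBA' : Y * r * B * A = Y * r := by rw [Matrix.mul_assoc _ B, hBA, Matrix.mul_one]
  have eY₂ : B * c * Y * r * B * c = B * c := by
    simp only [Matrix.mul_assoc] at hY₂ ⊢; rw [hY₂, Matrix.mul_one]
  constructor <;>
  · rw [fromBlocks_multiply, ← fromBlocks_one]
    simp [Matrix.mul_sub, Matrix.sub_mul, ← Matrix.mul_assoc, hAB, hBA, hY₁, hY₂, eBA, eBA', eY₂]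

theorem isUnit_fromBlocks_zero₂₂_iff {A B : Matrix m m S} {c : Matrix m n S}
    {r : Matrix n m S} (hAB : A * B = 1) (hBA : B * A = 1) :
    IsUnit (fromBlocks A c r 0) ↔ IsUnit (r * B * c) := by
  constructor
  · intro h
    obtain ⟨N, h₁, h₂⟩ := isUnit_iff_exists.1 h
    rw [← fromBlocks_toBlocks N, fromBlocks_multiply, ← fromBlocks_one, fromBlocks_inj] at h₁ h₂
    simp only [Matrix.zero_mul, add_zero, Matrix.mul_zero] at h₁ h₂
    have hc : c * N.toBlocks₂₂ = -(A * N.toBlocks₁₂) := eq_neg_of_add_eq_zero_right h₁.2.1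
    have hr : N.toBlocks₂₂ * r = -(N.toBlocks₂₁ * A) := eq_neg_of_add_eq_zero_right h₂.2.2.1
    refine isUnit_iff_exists.2 ⟨-N.toBlocks₂₂, ?_, ?_⟩
    · rw [Matrix.mul_neg, Matrix.mul_assoc, hc, Matrix.mul_neg, neg_neg, ← Matrix.mul_assoc,
        Matrix.mul_assoc r, hBA, Matrix.mul_one, h₁.2.2.2]
    · rw [Matrix.neg_mul, ← Matrix.mul_assoc, ← Matrix.mul_assoc, hr, Matrix.neg_mul,
        Matrix.neg_mul, neg_neg, Matrix.mul_assoc _ A, hAB, Matrix.mul_one, h₂.2.2.2]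
  · intro h
    obtain ⟨Y, h₁, h₂⟩ := isUnit_iff_exists.1 h
    rw [← Matrix.mul_assoc, ← Matrix.mul_assoc] at h₂
    obtain ⟨e₁, e₂⟩ := fromBlocks_zero₂₂_mul_eq_one hAB hBA h₁ h₂
    exact isUnit_iff_exists.2 ⟨_, e₁, e₂⟩

theorem mul_single_mul_apply {l o : Type*} (M : Matrix l m S) (N : Matrix n o S) (i : m)
    (j : n) (c : S) (a : l) (b : o) : (M * single i j c * N) a b = M a i * c * N j b := by
  rw [Matrix.mul_apply, Finset.sum_eq_single j]
  · rw [mul_single_apply_same]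
  · intro k _ hk
    rw [mul_single_apply_of_ne _ _ _ _ _ hk, zero_mul]
  · simp

theorem map_mul_map_eq_one {S' : Type*} [Ring S'] (h : S →+* S') {X Y : Matrix m m S}
    (hXY : X * Y = 1) : X.map h * Y.map h = 1 := by
  rw [← Matrix.map_mul, hXY, Matrix.map_one _ (map_zero h) (map_one h)]

def bordered (A : Matrix m m S) (i j : m) : Matrix (m ⊕ Fin 1) (m ⊕ Fin 1) S :=
  fromBlocks A (-single i 0 1) (single 0 j 1) 0

omit [Fintype m] in
theorem bordered_map {S' : Type*} [Ring S'] (h : S →+* S') (A : Matrix m m S) (i j : m) :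
    (bordered A i j).map h = bordered (A.map h) i j := by
  simp [bordered, fromBlocks_map, Matrix.map_neg _ (map_neg h), map_single]

variable {A B : Matrix m m S}

theorem isUnit_bordered_iff (hAB : A * B = 1) (hBA : B * A = 1) (i j : m) :
    IsUnit (bordered A i j) ↔ IsUnit (B j i) := by
  rw [bordered, isUnit_fromBlocks_zero₂₂_iff hAB hBA]
  simpa using (MulEquiv.isUnit_map (uniqueRingEquiv : Matrix (Fin 1) (Fin 1) S ≃+* S)
    (x := single 0 0 (B j i))).symm

theorem exists_bordered_inverse (hAB : A * B = 1) (hBA : B * A = 1) (i j : m) {y : S}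
    (hy₁ : B j i * y = 1) (hy₂ : y * B j i = 1) :
    ∃ N, bordered A i j * N = 1 ∧ N * bordered A i j = 1 ∧ N (Sum.inr 0) (Sum.inr 0) = y := by
  have hone : single (0 : Fin 1) (0 : Fin 1) (1 : S) = 1 := by
    ext a b
    rw [Subsingleton.elim a 0, Subsingleton.elim b 0]
    simp
  obtain ⟨e₁, e₂⟩ := fromBlocks_zero₂₂_mul_eq_one (c := -single i (0 : Fin 1) 1)
    (r := single (0 : Fin 1) j 1) (Y := -single 0 0 y) hAB hBA (by simp [hy₁, hone])
    (by rw [Matrix.mul_assoc, Matrix.mul_assoc, ← Matrix.mul_assoc (single _ j _)]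
        simp [hy₂, hone])
  exact ⟨_, e₁, e₂, by simp⟩

end Matrix

section RationalClosure

open Matrix

variable {Γ : Type u} [Group Γ] {R : Type v} [Ring R] {𝒜 : Γ → AddSubgroup R}
  {S : Type w} [Ring S] (f : R →+* S)

theorem mem_ratCl_of_inverse {ι : Type*} [Fintype ι] [DecidableEq ι] {A : Matrix ι ι R}
    {α β : ι → Γ} (hA : ∀ a b, A a b ∈ 𝒜 (α a * (β b)⁻¹)) {B : Matrix ι ι S}
    (h₁ : A.map f * B = 1) (h₂ : B * A.map f = 1) (i j : ι) :
    B j i ∈ RatCl 𝒜 Set.univ f (β j * (α i)⁻¹) := by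
  let e := (Fintype.equivFin ι).symm
  refine ⟨_, A.submatrix e e, α ∘ e, β ∘ e, e.symm i, e.symm j, B.submatrix e e, trivial,
    fun a b => hA _ _, by simp, ?_, ?_, by simp⟩
  · rw [← submatrix_map, submatrix_mul_equiv, h₁, submatrix_one_equiv]
  · rw [← submatrix_map, submatrix_mul_equiv, h₂, submatrix_one_equiv]

theorem map_mem_ratCl {S' : Type*} [Ring S'] (h : S →+* S') {γ : Γ} {x : S}
    (hx : x ∈ RatCl 𝒜 Set.univ f γ) : h x ∈ RatCl 𝒜 Set.univ (h.comp f) γ := by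
  obtain ⟨n, A, α, β, i, j, B, -, hA, hγ, h₁, h₂, rfl⟩ := hx
  exact ⟨n, A, α, β, i, j, B.map h, trivial, hA, hγ, map_mul_map_eq_one h h₁,
    map_mul_map_eq_one h h₂, rfl⟩

/-- Witnessed by `[[A, C], [0, A']]`, homogeneous once the distribution of `A'` is shifted by
`g`; scalars, sums and products of elements of `RatCl` are all entries of this form. -/
theorem neg_mul_mul_mem_ratCl {n n' : ℕ} {A : Matrix (Fin n) (Fin n) R}
    {A' : Matrix (Fin n') (Fin n') R} {C : Matrix (Fin n) (Fin n') R} {α β : Fin n → Γ}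
    {α' β' : Fin n' → Γ} {g : Γ} (hA : IsHomog 𝒜 A α β) (hA' : IsHomog 𝒜 A' α' β')
    (hC : IsHomog 𝒜 C α (β' · * g)) {B : Matrix (Fin n) (Fin n) S}
    {B' : Matrix (Fin n') (Fin n') S} (h₁ : A.map f * B = 1) (h₂ : B * A.map f = 1)
    (h₁' : A'.map f * B' = 1) (h₂' : B' * A'.map f = 1) (j : Fin n) (i' : Fin n') :
    -(B * C.map f * B') j i' ∈ RatCl 𝒜 Set.univ f (β j * (α' i' * g)⁻¹) := by
  have hM : ∀ a b, fromBlocks A C 0 A' a b ∈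
      𝒜 (Sum.elim α (α' · * g) a * (Sum.elim β (β' · * g) b)⁻¹) := by
    rintro (a | a) (b | b)
    · exact hA a b
    · exact hC a b
    · exact zero_mem _
    · simpa [mul_assoc] using hA' a b
  obtain ⟨e₁, e₂⟩ := fromBlocks_zero₂₁_mul_eq_one (C.map f) h₁ h₂ h₁' h₂'
  have key := mem_ratCl_of_inverse f hM (by simpa [fromBlocks_map] using e₁)
    (by simpa [fromBlocks_map] using e₂) (Sum.inr i') (Sum.inl j)
  rwa [fromBlocks_apply₁₂, Sum.elim_inl, Sum.elim_inr] at key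

theorem add_mem_ratCl {γ : Γ} {x y : S} (hx : x ∈ RatCl 𝒜 Set.univ f γ)
    (hy : y ∈ RatCl 𝒜 Set.univ f γ) : x + y ∈ RatCl 𝒜 Set.univ f γ := by
  obtain ⟨n, A, α, β, i, j, B, -, hA, rfl, h₁, h₂, rfl⟩ := hx
  obtain ⟨n', A', α', β', i', j', B', -, hA', hdeg, h₁', h₂', rfl⟩ := hy
  have hα' : α' i' = α i * (β j)⁻¹ * β' j' := by
    rw [show α' i' = (β' j' * (α' i')⁻¹)⁻¹ * β' j' by group, hdeg]; group
  have hC : IsHomog 𝒜 (-(A * single j j' (1 : R) + single i i' (1 : R) * A')) α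
      (β' · * ((β' j')⁻¹ * β j)) := by
    intro a b
    refine neg_mem (add_mem ?_ ?_)
    · by_cases hb : b = j'
      · subst hb; simpa using hA a j
      · simp [mul_single_apply_of_ne _ _ _ _ _ hb]
    · by_cases ha : a = i
      · subst ha
        simpa [hα', mul_assoc] using hA' i' b
      · simp [single_mul_apply_of_ne _ _ _ _ _ ha]
  have key := neg_mul_mul_mem_ratCl f hA hA' hC h₁ h₂ h₁' h₂' j i'
  rw [show β j * (α' i' * ((β' j')⁻¹ * β j))⁻¹ = β' j' * (α' i')⁻¹ by group, hdeg] at key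
  convert key using 1
  have hCf : (-(A * single j j' (1 : R) + single i i' (1 : R) * A')).map f =
      -(A.map f * single j j' (1 : S) + single i i' (1 : S) * A'.map f) := by
    rw [Matrix.map_neg _ (map_neg f), Matrix.map_add _ (map_add f), Matrix.map_mul,
      Matrix.map_mul, map_single, map_single, map_one]
  have hBCB : B * (A.map f * single j j' (1 : S) + single i i' (1 : S) * A'.map f) * B' =
      single j j' (1 : S) * B' + B * single i i' (1 : S) := by
    rw [Matrix.mul_add, Matrix.add_mul, ← Matrix.mul_assoc, h₂, Matrix.one_mul,
      ← Matrix.mul_assoc B, Matrix.mul_assoc (B * _), h₁', Matrix.mul_one]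
  simp only [hCf, Matrix.mul_neg, Matrix.neg_mul, hBCB]
  simp [add_comm]

variable (hone : (1 : R) ∈ 𝒜 1)
include hone

theorem mem_ratCl_of_mem {γ : Γ} {r : R} (hr : r ∈ 𝒜 γ) :
    f r ∈ RatCl 𝒜 Set.univ f γ := by
  have h1 : IsHomog 𝒜 (1 : Matrix (Fin 1) (Fin 1) R) 1 1 := by
    intro a b
    rw [Subsingleton.elim a b, one_apply_eq]
    simpa using hone
  have hC : IsHomog 𝒜 (of fun _ _ => -r : Matrix (Fin 1) (Fin 1) R) 1
      (fun b => (1 : Fin 1 → Γ) b * γ⁻¹) := by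
    intro a b
    simpa using neg_mem hr
  simpa using neg_mul_mul_mem_ratCl f h1 h1 hC (B := 1) (B' := 1) (by simp) (by simp)
    (by simp) (by simp) 0 0

theorem mul_mem_ratCl {γ δ : Γ} {x y : S} (hx : x ∈ RatCl 𝒜 Set.univ f γ)
    (hy : y ∈ RatCl 𝒜 Set.univ f δ) : x * y ∈ RatCl 𝒜 Set.univ f (γ * δ) := by
  obtain ⟨n, A, α, β, i, j, B, -, hA, rfl, h₁, h₂, rfl⟩ := hx
  obtain ⟨n', A', α', β', i', j', B', -, hA', rfl, h₁', h₂', rfl⟩ := hy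
  have hC : IsHomog 𝒜 (-single i j' 1) α (β' · * ((β' j')⁻¹ * α i)) := by
    intro a b
    by_cases h : i = a ∧ j' = b
    · obtain ⟨rfl, rfl⟩ := h
      simpa using neg_mem hone
    · simp [single_apply_of_ne _ _ _ _ _ h]
  have key := neg_mul_mul_mem_ratCl f hA hA' hC h₁ h₂ h₁' h₂' j i'
  rw [show β j * (α' i' * ((β' j')⁻¹ * α i))⁻¹ = β j * (α i)⁻¹ * (β' j' * (α' i')⁻¹) by
    group] at key
  convert key using 1
  simp [Matrix.map_neg, map_single, mul_single_mul_apply]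

theorem neg_mem_ratCl {γ : Γ} {x : S} (hx : x ∈ RatCl 𝒜 Set.univ f γ) :
    -x ∈ RatCl 𝒜 Set.univ f γ := by
  simpa using mul_mem_ratCl f hone (mem_ratCl_of_mem f hone (neg_mem hone)) hx

theorem zero_mem_ratCl (γ : Γ) : (0 : S) ∈ RatCl 𝒜 Set.univ f γ := by
  simpa using mem_ratCl_of_mem f hone (zero_mem (𝒜 γ))

theorem bordered_mem {n : ℕ} {A : Matrix (Fin n) (Fin n) R} {α β : Fin n → Γ}
    (hA : IsHomog 𝒜 A α β) (i j : Fin n) (a b : Fin n ⊕ Fin 1) :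
    bordered A i j a b ∈ 𝒜 (Sum.elim α (fun _ => β j) a * (Sum.elim β (fun _ => α i) b)⁻¹) := by
  rcases a with a | a <;> rcases b with b | b
  · exact hA a b
  · obtain rfl := Subsingleton.elim b 0
    by_cases h : i = a
    · subst h; simpa [bordered] using neg_mem hone
    · simp [bordered, single_apply_of_row_ne h]
  · obtain rfl := Subsingleton.elim a 0
    by_cases h : j = b
    · subst h; simpa [bordered] using hone
    · simp [bordered, single_apply_of_col_ne _ _ h]
  · simp [bordered]

theorem inv_mem_ratCl {γ : Γ} {x y : S} (hx : x ∈ RatCl 𝒜 Set.univ f γ) (h₁ : x * y = 1)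
    (h₂ : y * x = 1) : y ∈ RatCl 𝒜 Set.univ f γ⁻¹ := by
  obtain ⟨n, A, α, β, i, j, B, -, hA, rfl, hB₁, hB₂, rfl⟩ := hx
  obtain ⟨N, hN₁, hN₂, rfl⟩ := exists_bordered_inverse hB₁ hB₂ i j h₁ h₂
  have key := mem_ratCl_of_inverse f (bordered_mem hone hA i j) (by rwa [bordered_map])
    (by rwa [bordered_map]) (Sum.inr 0) (Sum.inr 0)
  simpa using key

end RationalClosure

namespace GrDivRingHom

open Matrix

variable {Γ : Type u} [Group Γ] [DecidableEq Γ] {R : Type v} [Ring R] {𝒜 : Γ → AddSubgroup R}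

noncomputable instance (d : GrDivRingHom Γ R 𝒜) : Decomposition d.grading :=
  d.internal.chooseDecomposition

def IsEpic (d : GrDivRingHom Γ R 𝒜) : Prop :=
  ∀ T : Subring d.K, Set.range ⇑d.φ ⊆ (T : Set d.K) →
    (∀ (γ : Γ) (x y : d.K), x ∈ d.grading γ → x ∈ T → x ≠ 0 → x * y = 1 → y * x = 1 → y ∈ T) →
    T = ⊤

def invertingSet (d : GrDivRingHom Γ R 𝒜) : Set (SqMat R) :=
  {p | IsHomogSq 𝒜 p.2 ∧ IsUnit (p.2.map d.φ)}

theorem ratCl_subset_grading (d : GrDivRingHom Γ R 𝒜) (γ : Γ) :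
    RatCl 𝒜 Set.univ d.φ γ ⊆ d.grading γ := by
  rintro _ ⟨n, A, α, β, i, j, B, -, hA, rfl, h₁, h₂, rfl⟩
  exact inverse_mem_of_homogeneous d.grading d.one_mem d.mul_mem (fun a b => d.map_mem (hA a b))
    h₁ h₂ j i

theorem isUnit_bordered_map_iff (d : GrDivRingHom Γ R 𝒜) {n : ℕ} {A : Matrix (Fin n) (Fin n) R}
    {α β : Fin n → Γ} (hA : IsHomog 𝒜 A α β) {B : Matrix (Fin n) (Fin n) d.K}
    (h₁ : A.map d.φ * B = 1) (h₂ : B * A.map d.φ = 1) (i j : Fin n) :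
    IsUnit ((bordered A i j).map d.φ) ↔ B j i ≠ 0 := by
  rw [bordered_map, isUnit_bordered_iff h₁ h₂]
  exact ⟨IsUnit.ne_zero,
    d.isUnit_of_ne (d.ratCl_subset_grading _ (mem_ratCl_of_inverse d.φ hA h₁ h₂ i j))⟩

variable {d₁ d₂ : GrDivRingHom Γ R 𝒜}

theorem isUnit_map_iff_of_invertingSet_eq (hEq : d₁.invertingSet = d₂.invertingSet)
    {ι : Type*} [Fintype ι] [DecidableEq ι] {M : Matrix ι ι R} {α β : ι → Γ}
    (hM : ∀ a b, M a b ∈ 𝒜 (α a * (β b)⁻¹)) : IsUnit (M.map d₁.φ) ↔ IsUnit (M.map d₂.φ) := by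
  let e := Fintype.equivFin ι
  have hmem : ∀ d : GrDivRingHom Γ R 𝒜,
      (⟨_, reindex e e M⟩ : SqMat R) ∈ d.invertingSet ↔ IsUnit (M.map d.φ) := fun d => by
    have hu := MulEquiv.isUnit_map (reindexRingEquiv d.K e) (x := M.map d.φ)
    exact ⟨fun h => hu.1 h.2, fun h => ⟨⟨α ∘ e.symm, β ∘ e.symm, fun a b => hM _ _⟩, hu.2 h⟩⟩
  rw [← hmem d₁, ← hmem d₂, hEq]

/-- Each side says that the bordered witness matrix does not become invertible under `φ₁`,
resp. `φ₂`. -/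
theorem fst_eq_zero_iff_snd_eq_zero (hone : (1 : R) ∈ 𝒜 1)
    (hEq : d₁.invertingSet = d₂.invertingSet) {γ : Γ} {x : d₁.K × d₂.K}
    (hx : x ∈ RatCl 𝒜 Set.univ (d₁.φ.prod d₂.φ) γ) : x.1 = 0 ↔ x.2 = 0 := by
  obtain ⟨n, A, α, β, i, j, B, -, hA, -, h₁, h₂, rfl⟩ := hx
  have key := (d₁.isUnit_bordered_map_iff hA (map_mul_map_eq_one (RingHom.fst _ _) h₁)
    (map_mul_map_eq_one (RingHom.fst _ _) h₂) i j).symm.trans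
    ((isUnit_map_iff_of_invertingSet_eq hEq (bordered_mem hone hA i j)).trans
    (d₂.isUnit_bordered_map_iff hA (map_mul_map_eq_one (RingHom.snd _ _) h₁)
    (map_mul_map_eq_one (RingHom.snd _ _) h₂) i j))
  exact not_iff_not.1 key

variable (d₁ d₂) in
noncomputable def component (γ : Γ) : d₁.K × d₂.K →+ d₁.K × d₂.K :=
  AddMonoidHom.mk'
    (fun t => ((decompose d₁.grading t.1 γ : d₁.K), (decompose d₂.grading t.2 γ : d₂.K)))
    fun t u => by simp

@[simp]
theorem component_apply (γ : Γ) (t : d₁.K × d₂.K) :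
    component d₁ d₂ γ t =
      ((decompose d₁.grading t.1 γ : d₁.K), (decompose d₂.grading t.2 γ : d₂.K)) :=
  rfl

theorem mem_grading_of_mem_ratCl {γ : Γ} {x : d₁.K × d₂.K}
    (hx : x ∈ RatCl 𝒜 Set.univ (d₁.φ.prod d₂.φ) γ) :
    x.1 ∈ d₁.grading γ ∧ x.2 ∈ d₂.grading γ := by
  have hx₁ := map_mem_ratCl _ (RingHom.fst _ _) hx
  have hx₂ := map_mem_ratCl _ (RingHom.snd _ _) hx
  rw [RingHom.fst_comp_prod] at hx₁
  rw [RingHom.snd_comp_prod] at hx₂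
  exact ⟨d₁.ratCl_subset_grading γ hx₁, d₂.ratCl_subset_grading γ hx₂⟩

theorem exists_sum_component (t : d₁.K × d₂.K) :
    ∃ s : Finset Γ, ∑ γ ∈ s, component d₁ d₂ γ t = t := by
  classical
  let s₁ := DFinsupp.support (decompose d₁.grading t.1)
  let s₂ := DFinsupp.support (decompose d₂.grading t.2)
  refine ⟨s₁ ∪ s₂, Prod.ext ?_ ?_⟩
  · rw [Prod.fst_sum, ← Finset.sum_subset Finset.subset_union_left (fun γ _ hγ => by
      simp [DFinsupp.notMem_support_iff.1 hγ])]
    exact sum_support_decompose d₁.grading t.1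
  · rw [Prod.snd_sum, ← Finset.sum_subset Finset.subset_union_right (fun γ _ hγ => by
      simp [DFinsupp.notMem_support_iff.1 hγ])]
    exact sum_support_decompose d₂.grading t.2

theorem component_mul_of_mem_ratCl {γ : Γ} {x : d₁.K × d₂.K}
    (hx : x ∈ RatCl 𝒜 Set.univ (d₁.φ.prod d₂.φ) γ) (δ : Γ) (u : d₁.K × d₂.K) :
    component d₁ d₂ (γ * δ) (x * u) = x * component d₁ d₂ δ u :=
  Prod.ext (decompose_mul_of_left_mem _ d₁.mul_mem (mem_grading_of_mem_ratCl hx).1 δ u.1)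
    (decompose_mul_of_left_mem _ d₂.mul_mem (mem_grading_of_mem_ratCl hx).2 δ u.2)

variable (hone : (1 : R) ∈ 𝒜 1)
include hone

variable (d₁ d₂) in
def couplingAddSubgroup : AddSubgroup (d₁.K × d₂.K) where
  carrier := {t | ∀ γ, component d₁ d₂ γ t ∈ RatCl 𝒜 Set.univ (d₁.φ.prod d₂.φ) γ}
  zero_mem' γ := by simpa only [map_zero] using zero_mem_ratCl _ hone γ
  add_mem' ht hu γ := by simpa only [map_add] using add_mem_ratCl _ (ht γ) (hu γ)
  neg_mem' ht γ := by simpa only [map_neg] using neg_mem_ratCl _ hone (ht γ)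

theorem mem_couplingAddSubgroup_of_mem_ratCl {γ : Γ} {x : d₁.K × d₂.K}
    (hx : x ∈ RatCl 𝒜 Set.univ (d₁.φ.prod d₂.φ) γ) : x ∈ couplingAddSubgroup d₁ d₂ hone := by
  obtain ⟨hx₁, hx₂⟩ := mem_grading_of_mem_ratCl hx
  intro δ
  by_cases h : γ = δ
  · subst h
    rwa [show component d₁ d₂ γ x = x from
      Prod.ext (decompose_of_mem_same _ hx₁) (decompose_of_mem_same _ hx₂)]
  · rw [show component d₁ d₂ δ x = 0 from
      Prod.ext (decompose_of_mem_ne _ hx₁ h) (decompose_of_mem_ne _ hx₂ h)]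
    exact zero_mem_ratCl _ hone δ

variable (d₁ d₂) in
def coupling : Subring (d₁.K × d₂.K) :=
  { couplingAddSubgroup d₁ d₂ hone with
    one_mem' := mem_couplingAddSubgroup_of_mem_ratCl hone (by
      simpa only [map_one] using mem_ratCl_of_mem (d₁.φ.prod d₂.φ) hone hone)
    mul_mem' := fun {t u} ht hu => by
      obtain ⟨s, hs⟩ := exists_sum_component t
      rw [← hs, Finset.sum_mul]
      refine (couplingAddSubgroup d₁ d₂ hone).sum_mem fun γ _ δ => ?_
      have := mul_mem_ratCl _ hone (ht γ) (hu (γ⁻¹ * δ))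
      rwa [← component_mul_of_mem_ratCl (ht γ), mul_inv_cancel_left] at this }

theorem map_mem_coupling (hinternal : IsInternal 𝒜) (r : R) :
    d₁.φ.prod d₂.φ r ∈ coupling d₁ d₂ hone := by
  obtain ⟨x, rfl⟩ := hinternal.2 r
  induction x using DirectSum.induction_on with
  | zero => rw [map_zero, map_zero]; exact zero_mem _
  | of γ x =>
    rw [coeAddMonoidHom_of]
    exact mem_couplingAddSubgroup_of_mem_ratCl hone (mem_ratCl_of_mem _ hone x.2)
  | add x y hx hy => rw [map_add, map_add]; exact add_mem hx hy

theorem swap_mem_coupling {t : d₁.K × d₂.K} (ht : t ∈ coupling d₁ d₂ hone) :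
    t.swap ∈ coupling d₂ d₁ hone :=
  fun γ => by
    have hswap : (RingEquiv.prodComm : d₁.K × d₂.K ≃+* d₂.K × d₁.K).toRingHom.comp
        (d₁.φ.prod d₂.φ) = d₂.φ.prod d₁.φ := RingHom.ext fun _ => rfl
    have := map_mem_ratCl _ (RingEquiv.prodComm : d₁.K × d₂.K ≃+* _).toRingHom (ht γ)
    rw [hswap] at this
    exact this

variable (hEq : d₁.invertingSet = d₂.invertingSet)
include hEq

theorem fst_eq_zero_iff_of_mem_coupling {t : d₁.K × d₂.K} (ht : t ∈ coupling d₁ d₂ hone) :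
    t.1 = 0 ↔ t.2 = 0 := by
  rw [decompose_eq_zero_iff d₁.grading, decompose_eq_zero_iff d₂.grading]
  exact forall_congr' fun γ => fst_eq_zero_iff_snd_eq_zero hone hEq (ht γ)

theorem fst_mem_grading_iff_of_mem_coupling {t : d₁.K × d₂.K} (ht : t ∈ coupling d₁ d₂ hone)
    (γ : Γ) : t.1 ∈ d₁.grading γ ↔ t.2 ∈ d₂.grading γ := by
  rw [mem_iff_decompose_eq_zero, mem_iff_decompose_eq_zero]
  exact forall₂_congr fun δ _ => fst_eq_zero_iff_snd_eq_zero hone hEq (ht δ)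

theorem map_fst_coupling_eq_top (hinternal : IsInternal 𝒜) (hepi : d₁.IsEpic) :
    (coupling d₁ d₂ hone).map (RingHom.fst _ _) = ⊤ := by
  refine hepi _ ?_ ?_
  · rintro _ ⟨r, rfl⟩
    exact ⟨_, map_mem_coupling hone hinternal r, rfl⟩
  · rintro γ x y hxγ ⟨t, ht, rfl⟩ hx hxy hyx
    have hp := ht γ
    have hc : (component d₁ d₂ γ t).1 = t.1 := decompose_of_mem_same _ hxγ
    have hx₂ : (component d₁ d₂ γ t).2 ≠ 0 :=
      fun h => hx (hc.symm.trans ((fst_eq_zero_iff_snd_eq_zero hone hEq hp).2 h))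
    obtain ⟨y₂, hy₁, hy₂⟩ := isUnit_iff_exists.1
      (d₂.isUnit_of_ne (mem_grading_of_mem_ratCl hp).2 hx₂)
    have hinv := inv_mem_ratCl _ hone hp (y := (y, y₂))
      (Prod.ext (by rw [Prod.fst_mul, hc]; exact hxy) hy₁)
      (Prod.ext (by rw [Prod.fst_mul, hc]; exact hyx) hy₂)
    exact ⟨_, mem_couplingAddSubgroup_of_mem_ratCl hone hinv, rfl⟩

theorem bijective_fst_coupling (hinternal : IsInternal 𝒜) (hepi : d₁.IsEpic) :
    Function.Bijective ((RingHom.fst _ _).comp (coupling d₁ d₂ hone).subtype) := by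
  refine ⟨(injective_iff_map_eq_zero _).2 fun t ht => ?_, fun x => ?_⟩
  · exact Subtype.ext (Prod.ext ht ((fst_eq_zero_iff_of_mem_coupling hone hEq t.2).1 ht))
  · obtain ⟨t, ht, rfl⟩ : x ∈ (coupling d₁ d₂ hone).map (RingHom.fst _ _) := by
      rw [map_fst_coupling_eq_top hone hEq hinternal hepi]; trivial
    exact ⟨⟨t, ht⟩, rfl⟩

theorem bijective_snd_coupling (hinternal : IsInternal 𝒜) (hepi : d₂.IsEpic) :
    Function.Bijective ((RingHom.snd _ _).comp (coupling d₁ d₂ hone).subtype) := by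
  refine ⟨(injective_iff_map_eq_zero _).2 fun t ht => ?_, fun x => ?_⟩
  · exact Subtype.ext (Prod.ext ((fst_eq_zero_iff_of_mem_coupling hone hEq t.2).2 ht) ht)
  · obtain ⟨t, ht, rfl⟩ : x ∈ (coupling d₂ d₁ hone).map (RingHom.fst _ _) := by
      rw [map_fst_coupling_eq_top hone hEq.symm hinternal hepi]; trivial
    exact ⟨⟨t.swap, swap_mem_coupling hone ht⟩, rfl⟩

end GrDivRingHom

namespace Subring

variable {S₁ S₂ : Type*} [Ring S₁] [Ring S₂] (T : Subring (S₁ × S₂))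
  (h₁ : Function.Bijective ((RingHom.fst S₁ S₂).comp T.subtype))
  (h₂ : Function.Bijective ((RingHom.snd S₁ S₂).comp T.subtype))

noncomputable def graphEquiv : S₁ ≃+* S₂ :=
  (RingEquiv.ofBijective _ h₁).symm.trans (RingEquiv.ofBijective _ h₂)

theorem mk_graphEquiv_mem (x : S₁) : (x, T.graphEquiv h₁ h₂ x) ∈ T := by
  have h : (x, T.graphEquiv h₁ h₂ x) = ((RingEquiv.ofBijective _ h₁).symm x : S₁ × S₂) :=
    Prod.ext ((RingEquiv.ofBijective _ h₁).apply_symm_apply x).symm rfl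
  rw [h]
  exact Subtype.prop _

theorem graphEquiv_apply_of_mem {x : S₁} {y : S₂} (h : (x, y) ∈ T) : T.graphEquiv h₁ h₂ x = y :=
  congrArg (fun t : T => (t : S₁ × S₂).2)
    (h₁.1 (a₁ := ⟨_, T.mk_graphEquiv_mem h₁ h₂ x⟩) (a₂ := ⟨_, h⟩) rfl)

theorem image_graphEquiv {G₁ : Set S₁} {G₂ : Set S₂} (hG : ∀ t ∈ T, t.1 ∈ G₁ ↔ t.2 ∈ G₂) :
    T.graphEquiv h₁ h₂ '' G₁ = G₂ := by
  ext y
  constructor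
  · rintro ⟨x, hx, rfl⟩
    exact (hG _ (T.mk_graphEquiv_mem h₁ h₂ x)).1 hx
  · intro hy
    refine ⟨(T.graphEquiv h₁ h₂).symm y, ?_, RingEquiv.apply_symm_apply _ y⟩
    have := T.mk_graphEquiv_mem h₁ h₂ ((T.graphEquiv h₁ h₂).symm y)
    rw [RingEquiv.apply_symm_apply] at this
    exact (hG _ this).2 hy

end Subring

theorem gr_epic_division_rings_iso_of_eq_inverting_general
    {Γ : Type u} [Group Γ] [DecidableEq Γ] {R : Type v} [Ring R]
    (𝒜 : Γ → AddSubgroup R)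
    (hinternal : DirectSum.IsInternal 𝒜)
    (hone : (1 : R) ∈ 𝒜 1)
    (d₁ d₂ : GrDivRingHom Γ R 𝒜)
    (hepi₁ : ∀ T : Subring d₁.K,
        Set.range ⇑d₁.φ ⊆ (T : Set d₁.K) →
        (∀ (γ : Γ) (x y : d₁.K), x ∈ d₁.grading γ → x ∈ T → x ≠ 0 →
          x * y = 1 → y * x = 1 → y ∈ T) →
        T = ⊤)
    (hepi₂ : ∀ T : Subring d₂.K,
        Set.range ⇑d₂.φ ⊆ (T : Set d₂.K) →
        (∀ (γ : Γ) (x y : d₂.K), x ∈ d₂.grading γ → x ∈ T → x ≠ 0 →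
          x * y = 1 → y * x = 1 → y ∈ T) →
        T = ⊤)
    (hEq : {p : SqMat R | IsHomogSq 𝒜 p.2 ∧ IsUnit ((p.2).map ⇑d₁.φ)} =
           {p : SqMat R | IsHomogSq 𝒜 p.2 ∧ IsUnit ((p.2).map ⇑d₂.φ)}) :
    ∃ ψ : d₁.K ≃+* d₂.K,
      (∀ γ : Γ, ⇑ψ '' (d₁.grading γ : Set d₁.K) = (d₂.grading γ : Set d₂.K)) ∧
      ∀ r : R, ψ (d₁.φ r) = d₂.φ r := by
  let T := d₁.coupling d₂ hone
  have h₁ := GrDivRingHom.bijective_fst_coupling hone hEq hinternal hepi₁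
  have h₂ := GrDivRingHom.bijective_snd_coupling hone hEq hinternal hepi₂
  refine ⟨T.graphEquiv h₁ h₂, fun γ => T.image_graphEquiv h₁ h₂ fun _ ht => ?_,
    fun r => T.graphEquiv_apply_of_mem h₁ h₂ (GrDivRingHom.map_mem_coupling hone hinternal r)⟩
  exact GrDivRingHom.fst_mem_grading_iff_of_mem_coupling hone hEq ht γ

/-- Let `(K₁, φ₁)` and `(K₂, φ₂)` be `Γ`-graded epic `R`-division
rings (epicness: the only subring of `Kᵢ` containing the image of `φᵢ` and closed
under inverses of its own nonzero homogeneous elements is `Kᵢ`).  If the sets of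
square homogeneous matrices over `R` that become invertible under `φ₁` and under
`φ₂` coincide, then there is a ring isomorphism `ψ : K₁ ≃+* K₂` carrying each
homogeneous component of `K₁` onto the corresponding component of `K₂` and
satisfying `ψ ∘ φ₁ = φ₂`. -/
theorem gr_epic_division_rings_iso_of_eq_inverting
    {Γ : Type u} [Group Γ] [DecidableEq Γ] {R : Type v} [Ring R]
    (𝒜 : Γ → AddSubgroup R)
    (hinternal : DirectSum.IsInternal 𝒜)
    (hone : (1 : R) ∈ 𝒜 1)
    (hmul : ∀ {γ δ : Γ} {x y : R}, x ∈ 𝒜 γ → y ∈ 𝒜 δ → x * y ∈ 𝒜 (γ * δ))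
    (d₁ d₂ : GrDivRingHom Γ R 𝒜)
    (hepi₁ : ∀ T : Subring d₁.K,
        Set.range ⇑d₁.φ ⊆ (T : Set d₁.K) →
        (∀ (γ : Γ) (x y : d₁.K), x ∈ d₁.grading γ → x ∈ T → x ≠ 0 →
          x * y = 1 → y * x = 1 → y ∈ T) →
        T = ⊤)
    (hepi₂ : ∀ T : Subring d₂.K,
        Set.range ⇑d₂.φ ⊆ (T : Set d₂.K) →
        (∀ (γ : Γ) (x y : d₂.K), x ∈ d₂.grading γ → x ∈ T → x ≠ 0 →
          x * y = 1 → y * x = 1 → y ∈ T) →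
        T = ⊤)
    (hEq : {p : SqMat R | IsHomogSq 𝒜 p.2 ∧ IsUnit ((p.2).map ⇑d₁.φ)} =
           {p : SqMat R | IsHomogSq 𝒜 p.2 ∧ IsUnit ((p.2).map ⇑d₂.φ)}) :
    ∃ ψ : d₁.K ≃+* d₂.K,
      (∀ γ : Γ, ⇑ψ '' (d₁.grading γ : Set d₁.K) = (d₂.grading γ : Set d₂.K)) ∧
      ∀ r : R, ψ (d₁.φ r) = d₂.φ r :=
  gr_epic_division_rings_iso_of_eq_inverting_general 𝒜 hinternal hone d₁ d₂ hepi₁ hepi₂ hEq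
end

section
/- Let Γ be a group and let R be a Γ-graded domain, i.e. a nonzero Γ-graded ring such that for homogeneous x, y ∈ R, xy = 0 implies x = 0 or y = 0. Suppose that for every nonzero homogeneous a ∈ R there exist a Γ-graded division ring K_a and a homomorphism of Γ-graded rings φ_a : R → K_a with φ_a(a) ≠ 0. Then there exist a Γ-graded division ring U and an injective homomorphism of Γ-graded rings R → U. -/
/-!
Index a family by the nonzero homogeneous elements `a` of `R`, with `φ_a a ≠ 0`. Since `R` is a
graded domain, the sets `{b | φ_b a ≠ 0}` are directed downwards (`{b | φ_b (a a') ≠ 0}` lies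
in both), so some ultrafilter `U` contains all of them. In the ultraproduct `∏ K_b / U` the
images of the homogeneous components `∏ (K_b)_γ` are independent and their nonzero elements are
invertible, so their sum is a graded division ring. The induced map from `R` sends no nonzero
homogeneous element to `0`, hence is injective.
-/

open Matrix

universe u v w

open DirectSum

section GradedPieces

variable {ι M N : Type*} [AddCommGroup M] [AddCommGroup N]

theorem AddSubgroup.iSupIndep_iff_finsetSum_eq_zero (p : ι → AddSubgroup M) :
    iSupIndep p ↔ ∀ (s : Finset ι) (v : ι → M),
      (∀ i ∈ s, v i ∈ p i) → ∑ i ∈ s, v i = 0 → ∀ i ∈ s, v i = 0 := by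
  rw [← iSupIndep_map_orderIso_iff AddSubgroup.toIntSubmodule,
    iSupIndep_iff_finsetSum_eq_zero_imp_eq_zero]
  rfl

theorem DirectSum.IsInternal.injective_of_homogeneous [DecidableEq ι] {𝒜 : ι → AddSubgroup M}
    {ℬ : ι → AddSubgroup N} (h𝒜 : IsInternal 𝒜) (hℬ : iSupIndep ℬ) (f : M →+ N)
    (hf : ∀ {i x}, x ∈ 𝒜 i → f x ∈ ℬ i) (hf₀ : ∀ {i x}, x ∈ 𝒜 i → f x = 0 → x = 0) :
    Function.Injective f := by
  classical
  rw [injective_iff_map_eq_zero]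
  intro r hr
  obtain ⟨x, rfl⟩ := h𝒜.surjective r
  rw [coeAddMonoidHom_eq_dfinsuppSum, DFinsupp.sum] at hr ⊢
  rw [map_sum] at hr
  have hx : ∀ i ∈ x.support, f (x i) = 0 :=
    (AddSubgroup.iSupIndep_iff_finsetSum_eq_zero ℬ).mp hℬ _ _ (fun i _ => hf (x i).2) hr
  exact Finset.sum_eq_zero fun i hi => hf₀ (x i).2 (hx i hi)

theorem iSupIndep.isInternal_addSubgroupOf_iSup [DecidableEq ι] {B : ι → AddSubgroup M}
    (hB : iSupIndep B) : IsInternal fun i => (B i).addSubgroupOf (⨆ i, B i) := by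
  refine ⟨iSupIndep.dfinsuppSumAddHom_injective ?_, fun ⟨x, hx⟩ => ?_⟩
  · rw [AddSubgroup.iSupIndep_iff_finsetSum_eq_zero] at hB ⊢
    intro s v hv hsum i hi
    refine Subtype.ext (hB s (fun i => v i) hv ?_ i hi)
    simpa using congrArg Subtype.val hsum
  · induction hx using AddSubgroup.iSup_induction' with
    | hp i y hy =>
      refine ⟨DirectSum.of _ i ⟨⟨y, AddSubgroup.mem_iSup_of_mem i hy⟩, ?_⟩, by simp⟩
      exact AddSubgroup.mem_addSubgroupOf.mpr hy
    | h1 => exact ⟨0, map_zero _⟩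
    | hadd y z _ _ hy hz =>
      obtain ⟨a, ha⟩ := hy
      obtain ⟨b, hb⟩ := hz
      exact ⟨a + b, by rw [map_add, ha, hb]; rfl⟩

end GradedPieces

section GradedRing

variable {Γ K : Type*} [Group Γ] [DecidableEq Γ] [Ring K] {g : Γ → AddSubgroup K}

theorem DirectSum.IsInternal.ring_inverse_mem (hg : IsInternal g) (h1 : (1 : K) ∈ g 1)
    (hmul : ∀ {γ δ : Γ} {x y : K}, x ∈ g γ → y ∈ g δ → x * y ∈ g (γ * δ))
    {γ : Γ} {x : K} (hx : x ∈ g γ) : Ring.inverse x ∈ g γ⁻¹ := by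
  by_cases hu : IsUnit x
  swap
  · rw [Ring.inverse_non_unit x hu]
    exact zero_mem _
  -- `GradedRing` needs an additively written index monoid
  let ℳ : Additive Γ → AddSubgroup K := fun i => g i.toMul
  let _ : GradedRing ℳ :=
    { one_mem := h1
      mul_mem := fun _ _ _ _ ha hb => hmul ha hb
      toDecomposition := IsInternal.chooseDecomposition (ℳ := ℳ) hg }
  set z : K := ↑(decompose ℳ (Ring.inverse x) (.ofMul γ⁻¹))
  have hzx : z * x = 1 := by
    have h := coe_decompose_mul_add_of_right_mem ℳ (a := Ring.inverse x) (i := .ofMul γ⁻¹)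
      (j := .ofMul γ) hx
    rwa [Ring.inverse_mul_cancel x hu, ← ofMul_mul, inv_mul_cancel, ofMul_one,
      decompose_of_mem_same ℳ (i := 0) h1, eq_comm] at h
  have hz : z = Ring.inverse x := by
    calc z = z * (x * Ring.inverse x) := by rw [Ring.mul_inverse_cancel x hu, mul_one]
      _ = Ring.inverse x := by rw [← mul_assoc, hzx, one_mul]
  exact hz ▸ (decompose ℳ (Ring.inverse x) (.ofMul γ⁻¹)).2

end GradedRing

section HomogeneousSubring

variable {Γ Q : Type*} [Mul Γ] [Ring Q] (B : Γ → AddSubgroup Q)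

theorem AddSubgroup.mul_mem_iSup_of_graded
    (hmul : ∀ {γ δ : Γ} {x y : Q}, x ∈ B γ → y ∈ B δ → x * y ∈ B (γ * δ))
    {x y : Q} (hx : x ∈ ⨆ γ, B γ) (hy : y ∈ ⨆ γ, B γ) : x * y ∈ ⨆ γ, B γ := by
  refine AddSubgroup.iSup_induction B (C := fun y => x * y ∈ ⨆ γ, B γ) hy
    (fun δ y hy => ?_) (by rw [mul_zero]; exact zero_mem _)
    (fun y y' h h' => by rw [mul_add]; exact add_mem h h')
  refine AddSubgroup.iSup_induction B (C := fun x => x * y ∈ ⨆ γ, B γ) hx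
    (fun γ x hx => AddSubgroup.mem_iSup_of_mem _ (hmul hx hy))
    (by rw [zero_mul]; exact zero_mem _) (fun x x' h h' => by rw [add_mul]; exact add_mem h h')

def homogeneousSubring [One Γ] (h1 : (1 : Q) ∈ B 1)
    (hmul : ∀ {γ δ : Γ} {x y : Q}, x ∈ B γ → y ∈ B δ → x * y ∈ B (γ * δ)) : Subring Q :=
  { (⨆ γ, B γ) with
    one_mem' := AddSubgroup.mem_iSup_of_mem 1 h1
    mul_mem' := AddSubgroup.mul_mem_iSup_of_graded B hmul }

end HomogeneousSubring

def Filter.eventuallyEqRingCon {ι : Type*} (l : Filter ι) (K : ι → Type*) [∀ i, Ring (K i)] :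
    RingCon (∀ i, K i) where
  r f g := ∀ᶠ i in l, f i = g i
  iseqv :=
    ⟨fun _ => .of_forall fun _ => rfl, fun h => h.mono fun _ => Eq.symm,
      fun h h' => (h.and h').mono fun _ h => h.1.trans h.2⟩
  mul' h h' := (h.and h').mono fun _ h => by simp only [Pi.mul_apply, h.1, h.2]
  add' h h' := (h.and h').mono fun _ h => by simp only [Pi.add_apply, h.1, h.2]

theorem Ultrafilter.exists_forall_mem_of_directed {α ι : Type*} [Nonempty ι] (S : ι → Set α)
    (hS : ∀ i, (S i).Nonempty) (hdir : Directed (· ⊇ ·) S) :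
    ∃ U : Ultrafilter α, ∀ i, S i ∈ U := by
  have : (⨅ i, Filter.principal (S i)).NeBot :=
    Filter.iInf_neBot_of_directed'
      (hdir.mono_comp (g := Filter.principal) (· ≥ ·) fun _ _ => Filter.principal_mono.mpr)
      fun i => Filter.principal_neBot_iff.mpr (hS i)
  exact ⟨.of _, fun i =>
    Ultrafilter.of_le _ (Filter.mem_iInf_of_mem i (Filter.mem_principal_self _))⟩

namespace GrDivRingHom

variable {Γ : Type u} [Group Γ] [DecidableEq Γ] {R : Type v} [Ring R] {𝒜 : Γ → AddSubgroup R}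

section Ultraproduct

variable {ι : Type*} (d : ι → GrDivRingHom Γ R 𝒜) (U : Ultrafilter ι)

abbrev Ultraproduct : Type _ := ((U : Filter ι).eventuallyEqRingCon fun i => (d i).K).Quotient

def ultraMk : (∀ i, (d i).K) →+* Ultraproduct d U := RingCon.mk' _

variable {d U}

theorem ultraMk_eq_ultraMk_iff {f g : ∀ i, (d i).K} :
    ultraMk d U f = ultraMk d U g ↔ ∀ᶠ i in U, f i = g i :=
  RingCon.eq _

theorem ultraMk_eq_zero_iff {f : ∀ i, (d i).K} : ultraMk d U f = 0 ↔ ∀ᶠ i in U, f i = 0 := by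
  rw [← map_zero (ultraMk d U), ultraMk_eq_ultraMk_iff]
  rfl

instance : Nontrivial (Ultraproduct d U) := by
  refine ⟨⟨ultraMk d U 1, 0, fun h => ?_⟩⟩
  obtain ⟨i, hi⟩ := (ultraMk_eq_zero_iff.mp h).exists
  exact one_ne_zero hi

variable (d U) in
def ultraGrading (γ : Γ) : AddSubgroup (Ultraproduct d U) :=
  (AddSubgroup.pi Set.univ fun i => (d i).grading γ).map (ultraMk d U).toAddMonoidHom

theorem mem_ultraGrading {γ : Γ} {x : Ultraproduct d U} :
    x ∈ ultraGrading d U γ ↔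
      ∃ f : ∀ i, (d i).K, (∀ i, f i ∈ (d i).grading γ) ∧ ultraMk d U f = x := by
  simp [ultraGrading, AddSubgroup.mem_pi]

theorem one_mem_ultraGrading : (1 : Ultraproduct d U) ∈ ultraGrading d U 1 :=
  mem_ultraGrading.mpr ⟨1, fun i => (d i).one_mem, map_one _⟩

theorem mul_mem_ultraGrading {γ δ : Γ} {x y : Ultraproduct d U} (hx : x ∈ ultraGrading d U γ)
    (hy : y ∈ ultraGrading d U δ) : x * y ∈ ultraGrading d U (γ * δ) := by
  obtain ⟨f, hf, rfl⟩ := mem_ultraGrading.mp hx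
  obtain ⟨g, hg, rfl⟩ := mem_ultraGrading.mp hy
  exact mem_ultraGrading.mpr ⟨f * g, fun i => (d i).mul_mem (hf i) (hg i), map_mul _ f g⟩

theorem iSupIndep_ultraGrading : iSupIndep (ultraGrading d U) := by
  rw [AddSubgroup.iSupIndep_iff_finsetSum_eq_zero]
  intro s v hv hsum
  have hlift : ∀ γ, ∃ f : ∀ i, (d i).K,
      (∀ i, f i ∈ (d i).grading γ) ∧ (γ ∈ s → ultraMk d U f = v γ) := by
    intro γ
    by_cases hγ : γ ∈ s
    · obtain ⟨f, hf, hfv⟩ := mem_ultraGrading.mp (hv γ hγ)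
      exact ⟨f, hf, fun _ => hfv⟩
    · exact ⟨0, fun _ => zero_mem _, fun h => absurd h hγ⟩
  choose F hF hFv using hlift
  have hF_sum : ∀ᶠ i in U, ∑ γ ∈ s, F γ i = 0 := by
    have h : ultraMk d U (∑ γ ∈ s, F γ) = 0 := by
      rw [map_sum, ← hsum]
      exact Finset.sum_congr rfl fun γ hγ => hFv γ hγ
    simpa only [Finset.sum_apply] using ultraMk_eq_zero_iff.mp h
  intro γ hγ
  rw [← hFv γ hγ, ultraMk_eq_zero_iff]
  filter_upwards [hF_sum] with i hi
  exact (AddSubgroup.iSupIndep_iff_finsetSum_eq_zero _).mp (d i).internal.addSubgroup_iSupIndep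
    s (fun γ => F γ i) (fun γ _ => hF γ i) hi γ hγ

theorem exists_inv_mem_ultraGrading {γ : Γ} {x : Ultraproduct d U} (hx : x ∈ ultraGrading d U γ)
    (hx₀ : x ≠ 0) : ∃ y ∈ ultraGrading d U γ⁻¹, x * y = 1 ∧ y * x = 1 := by
  obtain ⟨f, hf, rfl⟩ := mem_ultraGrading.mp hx
  have hunit : ∀ᶠ i in U, IsUnit (f i) :=
    (Ultrafilter.eventually_not.mpr fun h => hx₀ (ultraMk_eq_zero_iff.mpr h)).mono
      fun i hi => (d i).isUnit_of_ne (hf i) hi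
  refine ⟨ultraMk d U fun i => Ring.inverse (f i), mem_ultraGrading.mpr ⟨_, fun i =>
    (d i).internal.ring_inverse_mem (d i).one_mem (d i).mul_mem (hf i), rfl⟩, ?_, ?_⟩ <;>
  rw [← map_mul, ← map_one (ultraMk d U), ultraMk_eq_ultraMk_iff] <;>
  filter_upwards [hunit] with i hi
  · exact Ring.mul_inverse_cancel _ hi
  · exact Ring.inverse_mul_cancel _ hi

-- The ultraproduct is not the direct sum of its homogeneous parts; their sum is.
variable (d U) in
abbrev ultraSubring : Subring (Ultraproduct d U) :=
  homogeneousSubring (ultraGrading d U) one_mem_ultraGrading mul_mem_ultraGrading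

variable (d U) in
def ultraSubringGrading (γ : Γ) : AddSubgroup (ultraSubring d U) :=
  (ultraGrading d U γ).addSubgroupOf (⨆ γ, ultraGrading d U γ)

theorem mem_ultraSubringGrading {γ : Γ} {x : ultraSubring d U} :
    x ∈ ultraSubringGrading d U γ ↔ (x : Ultraproduct d U) ∈ ultraGrading d U γ :=
  AddSubgroup.mem_addSubgroupOf

theorem mem_ultraSubring {x : Ultraproduct d U} :
    x ∈ ultraSubring d U ↔ x ∈ ⨆ γ, ultraGrading d U γ :=
  Iff.rfl

variable (d U) in
def ultraMap : R →+* Ultraproduct d U := (ultraMk d U).comp (RingHom.pi fun i => (d i).φ)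

theorem ultraMap_mem_ultraGrading {γ : Γ} {r : R} (hr : r ∈ 𝒜 γ) :
    ultraMap d U r ∈ ultraGrading d U γ :=
  mem_ultraGrading.mpr ⟨_, fun i => (d i).map_mem hr, rfl⟩

theorem ultraMap_mem_ultraSubring (hint : IsInternal 𝒜) (r : R) :
    ultraMap d U r ∈ ultraSubring d U := by
  classical
  obtain ⟨x, rfl⟩ := hint.surjective r
  rw [coeAddMonoidHom_eq_dfinsuppSum, DFinsupp.sum, map_sum]
  exact sum_mem fun γ _ => mem_ultraSubring.mpr
    (AddSubgroup.mem_iSup_of_mem γ (ultraMap_mem_ultraGrading (x γ).2))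

end Ultraproduct

section

variable {ι : Type (max u v)} (d : ι → GrDivRingHom Γ R 𝒜) (U : Ultrafilter ι)

def ultraproduct (hint : IsInternal 𝒜) : GrDivRingHom Γ R 𝒜 where
  K := ultraSubring d U
  grading := ultraSubringGrading d U
  internal := iSupIndep_ultraGrading.isInternal_addSubgroupOf_iSup
  one_mem := mem_ultraSubringGrading.mpr one_mem_ultraGrading
  mul_mem hx hy := mem_ultraSubringGrading.mpr
    (mul_mem_ultraGrading (mem_ultraSubringGrading.mp hx) (mem_ultraSubringGrading.mp hy))
  isUnit_of_ne {_ x} hx hx₀ := by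
    obtain ⟨y, hy, hxy, hyx⟩ := exists_inv_mem_ultraGrading (mem_ultraSubringGrading.mp hx)
      (Subtype.coe_ne_coe.mpr hx₀)
    have hyT : y ∈ ultraSubring d U := mem_ultraSubring.mpr (AddSubgroup.mem_iSup_of_mem _ hy)
    exact ⟨⟨x, ⟨y, hyT⟩, Subtype.ext hxy, Subtype.ext hyx⟩, rfl⟩
  φ := (ultraMap d U).codRestrict _ (ultraMap_mem_ultraSubring hint)
  map_mem hr := mem_ultraSubringGrading.mpr (ultraMap_mem_ultraGrading hr)

theorem ultraproduct_injective (hint : IsInternal 𝒜)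
    (hU : ∀ {γ : Γ} {r : R}, r ∈ 𝒜 γ → r ≠ 0 → ∀ᶠ i in U, (d i).φ r ≠ 0) :
    Function.Injective (ultraproduct d U hint).φ := by
  refine hint.injective_of_homogeneous (ultraproduct d U hint).internal.addSubgroup_iSupIndep
    (ultraproduct d U hint).φ.toAddMonoidHom (ultraproduct d U hint).map_mem fun {_ r} hr h => ?_
  by_contra hr₀
  have hzero : ∀ᶠ i in U, (d i).φ r = 0 := ultraMk_eq_zero_iff.mp (congrArg Subtype.val h)
  obtain ⟨i, hi₀, hi⟩ := ((hU hr hr₀).and hzero).exists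
  exact hi₀ hi

end

end GrDivRingHom

/-- Let `R` be a `Γ`-graded domain.  If for every nonzero
homogeneous `a ∈ R` there exist a `Γ`-graded division ring `K_a` and a
homomorphism of `Γ`-graded rings `φ_a : R → K_a` with `φ_a a ≠ 0`, then there
exist a `Γ`-graded division ring `U` and an injective homomorphism of `Γ`-graded
rings `R → U`. -/
theorem exists_injective_graded_hom_of_separating_family
    {Γ : Type u} [Group Γ] [DecidableEq Γ] {R : Type v} [Ring R] [Nontrivial R]
    (𝒜 : Γ → AddSubgroup R)
    (hinternal : DirectSum.IsInternal 𝒜)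
    (hone : (1 : R) ∈ 𝒜 1)
    (hmul : ∀ {γ δ : Γ} {x y : R}, x ∈ 𝒜 γ → y ∈ 𝒜 δ → x * y ∈ 𝒜 (γ * δ))
    (hdom : ∀ {γ δ : Γ} {x y : R}, x ∈ 𝒜 γ → y ∈ 𝒜 δ → x * y = 0 → x = 0 ∨ y = 0)
    (hsep : ∀ (γ : Γ) (a : R), a ∈ 𝒜 γ → a ≠ 0 →
      ∃ d : GrDivRingHom Γ R 𝒜, d.φ a ≠ 0) :
    ∃ d : GrDivRingHom Γ R 𝒜, Function.Injective ⇑d.φ := by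
  choose d hd using hsep
  let ι := {p : Γ × R // p.2 ∈ 𝒜 p.1 ∧ p.2 ≠ 0}
  let D : ι → GrDivRingHom Γ R 𝒜 := fun p => d p.1.1 p.1.2 p.2.1 p.2.2
  have : Nonempty ι := ⟨⟨(1, 1), hone, one_ne_zero⟩⟩
  have hdir : Directed (· ⊇ ·) fun p : ι => {q : ι | (D q).φ p.1.2 ≠ 0} := by
    rintro ⟨⟨γ, a⟩, ha, ha₀⟩ ⟨⟨δ, b⟩, hb, hb₀⟩
    refine ⟨⟨(γ * δ, a * b), hmul ha hb, fun h => (hdom ha hb h).elim ha₀ hb₀⟩,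
      fun q hq => ?_, fun q hq => ?_⟩ <;> simp only [Set.mem_ofPred_eq, map_mul] at hq ⊢
    exacts [left_ne_zero_of_mul hq, right_ne_zero_of_mul hq]
  obtain ⟨U, hU⟩ := Ultrafilter.exists_forall_mem_of_directed _ (fun p => ⟨p, hd _ _ _ _⟩) hdir
  exact ⟨GrDivRingHom.ultraproduct D U hinternal,
    GrDivRingHom.ultraproduct_injective D U hinternal fun ha ha₀ => hU ⟨(_, _), ha, ha₀⟩⟩
end

section
/- Let Γ be a group, R a Γ-graded ring, and let rank be a gr-Sylvester matrix rank function for R, i.e., an ℕ-valued function on the rectangular homogeneous matrices over R such that: (MatRF1) the rank of the 1×1 identity matrix is 1; (MatRF2) rank(AB) ≤ min(rank A, rank B) whenever A is homogeneous of distribution (ᾱ, β̄) and B is homogeneous of distribution (β̄, ε̄); (MatRF3) rank(A ⊕ B) = rank A + rank B for all homogeneous A, B; (MatRF4) the rank of the block matrix [[A, C], [0, B]] is at least rank A + rank B whenever A, B, C are homogeneous of distributions (ᾱ, β̄), (δ̄, ε̄), (ᾱ, ε̄) respectively. Then the set 𝒫 = {A ∈ 𝔐(R) : rank A < n, where A is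 n×n} is a gr-prime matrix ideal of R. -/
open Matrix

universe u v w

/-!
Once `rk 1ₙ = n` is known, the axioms bound the rank by the number of columns and make it
invariant under permutations, which gives everything except (PM2). For (PM2) along a column `c`,
write `A`, `B`, `C` as `[A' | a]`, `[A' | b]`, `[A' | a + b]`. On the one hand
`rk [A' | a + b] ≤ rk A' + 1`. On the other hand, invertible block operations turn
`diag([A' | a], [A' | b])` into a block lower triangular matrix with diagonal blocks
`[A' | a | b]` and `A'`, whence `rk [A' | a + b] + rk A' ≤ rk A + rk B ≤ 2n - 2`. Adding the two
inequalities gives `rk C < n`. The row case is the column case for the transposed rank function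
on the opposite ring `Rᵐᵒᵖ`.
-/

section Homogeneous

variable {Γ : Type*} [Group Γ] {R : Type*} [Ring R]

class IsGradedMonoid (𝒜 : Γ → AddSubgroup R) : Prop where
  one_mem : (1 : R) ∈ 𝒜 1
  mul_mem : ∀ {γ δ : Γ} {x y : R}, x ∈ 𝒜 γ → y ∈ 𝒜 δ → x * y ∈ 𝒜 (γ * δ)

def IsGrHomog (𝒜 : Γ → AddSubgroup R) {I J : Type*} (A : Matrix I J R) (α : I → Γ)
    (β : J → Γ) : Prop :=
  ∀ i j, A i j ∈ 𝒜 (α i * (β j)⁻¹)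

namespace IsGrHomog

variable {𝒜 : Γ → AddSubgroup R} {I J K I' J' : Type*} {α : I → Γ} {β : J → Γ}
  {α' : I' → Γ} {β' : J' → Γ}

theorem zero : IsGrHomog 𝒜 (0 : Matrix I J R) α β :=
  fun _ _ => (𝒜 _).zero_mem

theorem one [IsGradedMonoid 𝒜] [DecidableEq I] (α : I → Γ) :
    IsGrHomog 𝒜 (1 : Matrix I I R) α α := by
  intro i j
  rcases eq_or_ne i j with rfl | h
  · simpa using IsGradedMonoid.one_mem
  · simp [Matrix.one_apply_ne h]

theorem neg {A : Matrix I J R} (h : IsGrHomog 𝒜 A α β) : IsGrHomog 𝒜 (-A) α β :=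
  fun i j => (𝒜 _).neg_mem (h i j)

theorem add {A B : Matrix I J R} (hA : IsGrHomog 𝒜 A α β) (hB : IsGrHomog 𝒜 B α β) :
    IsGrHomog 𝒜 (A + B) α β :=
  fun i j => (𝒜 _).add_mem (hA i j) (hB i j)

theorem submatrix {A : Matrix I J R} (h : IsGrHomog 𝒜 A α β) (e : I' → I) (f : J' → J) :
    IsGrHomog 𝒜 (A.submatrix e f) (α ∘ e) (β ∘ f) :=
  fun i j => h (e i) (f j)

theorem mul [IsGradedMonoid 𝒜] [Fintype J] {A : Matrix I J R} {B : Matrix J K R}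
    {ε : K → Γ} (hA : IsGrHomog 𝒜 A α β) (hB : IsGrHomog 𝒜 B β ε) :
    IsGrHomog 𝒜 (A * B) α ε := by
  intro i k
  refine AddSubgroup.sum_mem _ fun j _ => ?_
  simpa [mul_assoc] using IsGradedMonoid.mul_mem (hA i j) (hB j k)

theorem fromBlocks {A : Matrix I J R} {B : Matrix I J' R} {C : Matrix I' J R}
    {D : Matrix I' J' R} (hA : IsGrHomog 𝒜 A α β) (hB : IsGrHomog 𝒜 B α β')
    (hC : IsGrHomog 𝒜 C α' β) (hD : IsGrHomog 𝒜 D α' β') :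
    IsGrHomog 𝒜 (Matrix.fromBlocks A B C D) (Sum.elim α α') (Sum.elim β β') := by
  rintro (i | i) (j | j)
  exacts [hA i j, hB i j, hC i j, hD i j]

theorem fromCols {A : Matrix I J R} {B : Matrix I J' R} (hA : IsGrHomog 𝒜 A α β)
    (hB : IsGrHomog 𝒜 B α β') : IsGrHomog 𝒜 (Matrix.fromCols A B) α (Sum.elim β β') := by
  rintro i (j | j)
  exacts [hA i j, hB i j]

theorem fromRows {A : Matrix I J R} {B : Matrix I' J R} (hA : IsGrHomog 𝒜 A α β)
    (hB : IsGrHomog 𝒜 B α' β) : IsGrHomog 𝒜 (Matrix.fromRows A B) (Sum.elim α α') β := by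
  rintro (i | i) j
  exacts [hA i j, hB i j]

theorem of_isDetSum {n : ℕ} {A B C : Matrix (Fin n) (Fin n) R} {α β : Fin n → Γ}
    (hA : IsGrHomog 𝒜 A α β) (hB : IsGrHomog 𝒜 B α β) (h : IsDetSum A B C) :
    IsGrHomog 𝒜 C α β := by
  intro i j
  rcases h with ⟨c, -, hC⟩ | ⟨r, -, hC⟩ <;>
  · rw [hC]
    split_ifs
    exacts [(𝒜 _).add_mem (hA i j) (hB i j), hA i j]

end IsGrHomog

theorem IsHomogSq.diagSum {𝒜 : Γ → AddSubgroup R} {m n m' n' : ℕ}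
    {A : Matrix (Fin m) (Fin n) R} {B : Matrix (Fin m') (Fin n') R}
    (hA : IsHomogSq 𝒜 A) (hB : IsHomogSq 𝒜 B) : IsHomogSq 𝒜 (diagSum A B) := by
  obtain ⟨α, β, hA⟩ := hA
  obtain ⟨α', β', hB⟩ := hB
  exact ⟨_, _, (IsGrHomog.fromBlocks hA .zero .zero hB).submatrix _ _⟩

end Homogeneous

section Opposite

open MulOpposite

variable {Γ : Type*} [Group Γ] {R : Type*} [Ring R] {𝒜 : Γ → AddSubgroup R}

/-- `Rᵐᵒᵖ` graded by `(Rᵐᵒᵖ)_γ = R_{γ⁻¹}`: the inversion makes the transpose of a matrix of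
distribution `(α, β)` homogeneous of distribution `(β, α)`. -/
def oppGrading (𝒜 : Γ → AddSubgroup R) : Γ → AddSubgroup Rᵐᵒᵖ :=
  fun γ => (𝒜 γ⁻¹).comap (opAddEquiv : R ≃+ Rᵐᵒᵖ).symm.toAddMonoidHom

theorem mem_oppGrading {γ : Γ} {x : Rᵐᵒᵖ} : x ∈ oppGrading 𝒜 γ ↔ x.unop ∈ 𝒜 γ⁻¹ :=
  Iff.rfl

instance [IsGradedMonoid 𝒜] : IsGradedMonoid (oppGrading 𝒜) where
  one_mem := by simpa [mem_oppGrading] using IsGradedMonoid.one_mem (𝒜 := 𝒜)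
  mul_mem hx hy := by
    rw [mem_oppGrading, unop_mul, _root_.mul_inv_rev]
    exact IsGradedMonoid.mul_mem hy hx

variable {I J K : Type*} {α : I → Γ} {β : J → Γ}

theorem IsGrHomog.unop_transpose {A : Matrix I J Rᵐᵒᵖ} (h : IsGrHomog (oppGrading 𝒜) A α β) :
    IsGrHomog 𝒜 (Aᵀ.map unop) β α := by
  intro j i
  simpa [mem_oppGrading] using h i j

theorem IsGrHomog.op_transpose {A : Matrix I J R} (h : IsGrHomog 𝒜 A α β) :
    IsGrHomog (oppGrading 𝒜) (Aᵀ.map op) β α := by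
  intro j i
  simpa [mem_oppGrading] using h i j

theorem Matrix.transpose_map_unop_mul [Fintype J] (A : Matrix I J Rᵐᵒᵖ)
    (B : Matrix J K Rᵐᵒᵖ) : (A * B)ᵀ.map unop = Bᵀ.map unop * Aᵀ.map unop := by
  ext
  simp [mul_apply]

theorem Matrix.transpose_map_unop_diagSum {m n m' n' : ℕ} (A : Matrix (Fin m) (Fin n) Rᵐᵒᵖ)
    (B : Matrix (Fin m') (Fin n') Rᵐᵒᵖ) :
    (diagSum A B)ᵀ.map unop = diagSum (Aᵀ.map unop) (Bᵀ.map unop) := by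
  simp [diagSum, fromBlocks_transpose, ← submatrix_map, fromBlocks_map]

theorem Matrix.transpose_map_unop_upperBlockSum {m n m' n' : ℕ}
    (A : Matrix (Fin m) (Fin n) Rᵐᵒᵖ) (B : Matrix (Fin m') (Fin n') Rᵐᵒᵖ)
    (C : Matrix (Fin m) (Fin n') Rᵐᵒᵖ) :
    (upperBlockSum A B C)ᵀ.map unop = reindex finSumFinEquiv finSumFinEquiv
      (fromBlocks (Aᵀ.map unop) 0 (Cᵀ.map unop) (Bᵀ.map unop)) := by
  simp [upperBlockSum, fromBlocks_transpose, ← submatrix_map, fromBlocks_map]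

end Opposite

structure GrSylvesterRank {Γ : Type*} [Group Γ] {R : Type*} [Ring R]
    (𝒜 : Γ → AddSubgroup R) where
  rk : ∀ {m n : ℕ}, Matrix (Fin m) (Fin n) R → ℕ
  rk_one_one : rk (1 : Matrix (Fin 1) (Fin 1) R) = 1
  rk_mul_le : ∀ {m n k : ℕ} (A : Matrix (Fin m) (Fin n) R) (B : Matrix (Fin n) (Fin k) R)
    (α : Fin m → Γ) (β : Fin n → Γ) (ε : Fin k → Γ),
    IsHomog 𝒜 A α β → IsHomog 𝒜 B β ε → rk (A * B) ≤ min (rk A) (rk B)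
  rk_diagSum : ∀ {m n m' n' : ℕ} (A : Matrix (Fin m) (Fin n) R)
    (B : Matrix (Fin m') (Fin n') R),
    IsHomogSq 𝒜 A → IsHomogSq 𝒜 B → rk (diagSum A B) = rk A + rk B
  add_le_rk_upperBlockSum : ∀ {m n m' n' : ℕ} (A : Matrix (Fin m) (Fin n) R)
    (B : Matrix (Fin m') (Fin n') R) (C : Matrix (Fin m) (Fin n') R)
    (α : Fin m → Γ) (β : Fin n → Γ) (δ : Fin m' → Γ) (ε : Fin n' → Γ),
    IsHomog 𝒜 A α β → IsHomog 𝒜 B δ ε → IsHomog 𝒜 C α ε →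
    rk A + rk B ≤ rk (upperBlockSum A B C)

namespace GrSylvesterRank

variable {Γ : Type*} [Group Γ] {R : Type*} [Ring R] {𝒜 : Γ → AddSubgroup R}
  (d : GrSylvesterRank 𝒜)

section Fin

variable {m n m' n' : ℕ}

theorem rk_mul_le_left {k : ℕ} {A : Matrix (Fin m) (Fin n) R} {B : Matrix (Fin n) (Fin k) R}
    {α β ε} (hA : IsGrHomog 𝒜 A α β) (hB : IsGrHomog 𝒜 B β ε) : d.rk (A * B) ≤ d.rk A :=
  (d.rk_mul_le A B α β ε hA hB).trans (min_le_left _ _)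

theorem rk_mul_le_right {k : ℕ} {A : Matrix (Fin m) (Fin n) R} {B : Matrix (Fin n) (Fin k) R}
    {α β ε} (hA : IsGrHomog 𝒜 A α β) (hB : IsGrHomog 𝒜 B β ε) : d.rk (A * B) ≤ d.rk B :=
  (d.rk_mul_le A B α β ε hA hB).trans (min_le_right _ _)

variable [IsGradedMonoid 𝒜]

theorem rk_one (n : ℕ) : d.rk (1 : Matrix (Fin n) (Fin n) R) = n := by
  have diagSum_one (k : ℕ) :
      diagSum (1 : Matrix (Fin k) (Fin k) R) (1 : Matrix (Fin 1) (Fin 1) R) = 1 := by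
    rw [diagSum, fromBlocks_one, reindex_apply, submatrix_one_equiv]
  have homog (k : ℕ) : IsHomogSq 𝒜 (1 : Matrix (Fin k) (Fin k) R) :=
    ⟨1, 1, IsGrHomog.one 1⟩
  induction n with
  | zero =>
    have := d.rk_diagSum _ _ (homog 0) (homog 1)
    rw [diagSum_one, d.rk_one_one] at this
    omega
  | succ n ih => rw [← diagSum_one, d.rk_diagSum _ _ (homog n) (homog 1), ih, d.rk_one_one]

theorem rk_le_card_cols {A : Matrix (Fin m) (Fin n) R} {α β} (hA : IsGrHomog 𝒜 A α β) :
    d.rk A ≤ n := by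
  simpa [d.rk_one] using d.rk_mul_le_right hA (IsGrHomog.one β)

theorem rk_submatrix_le {A : Matrix (Fin m) (Fin n) R} {α β} (hA : IsGrHomog 𝒜 A α β)
    (e : Fin m' → Fin m) (f : Fin n' → Fin n) : d.rk (A.submatrix e f) ≤ d.rk A := by
  have hE := (IsGrHomog.one (𝒜 := 𝒜) α).submatrix e id
  have hF := (IsGrHomog.one (𝒜 := 𝒜) β).submatrix id f
  have h : A.submatrix e f = (1 : Matrix (Fin m) (Fin m) R).submatrix e (Equiv.refl _) * A *
      (1 : Matrix (Fin n) (Fin n) R).submatrix (Equiv.refl _) f := by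
    rw [one_submatrix_mul, mul_submatrix_one]
    rfl
  rw [h]
  exact (d.rk_mul_le_left (hE.mul hA) hF).trans (d.rk_mul_le_right hE hA)

theorem rk_submatrix_equiv {A : Matrix (Fin m) (Fin n) R} {α β} (hA : IsGrHomog 𝒜 A α β)
    (e : Fin m' ≃ Fin m) (f : Fin n' ≃ Fin n) : d.rk (A.submatrix e f) = d.rk A := by
  refine (d.rk_submatrix_le hA e f).antisymm ?_
  simpa using d.rk_submatrix_le (hA.submatrix e f) e.symm f.symm

theorem rk_lt_of_not_isGrFull {A : Matrix (Fin n) (Fin n) R} (hA : ¬IsGrFull 𝒜 A) :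
    d.rk A < n := by
  simp only [IsGrFull, not_forall, not_le] at hA
  obtain ⟨r, P, Q, α, lam, β, hP, hQ, rfl, hr⟩ := hA
  exact (d.rk_mul_le_left hP hQ).trans_lt ((d.rk_le_card_cols hP).trans_lt hr)

theorem rk_diagSum_lt_iff {A : Matrix (Fin m) (Fin m) R} {B : Matrix (Fin n) (Fin n) R}
    (hA : IsHomogSq 𝒜 A) (hB : IsHomogSq 𝒜 B) :
    d.rk (diagSum A B) < m + n ↔ d.rk A < m ∨ d.rk B < n := by
  obtain ⟨α, β, hA'⟩ := hA
  obtain ⟨α', β', hB'⟩ := hB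
  have := d.rk_le_card_cols hA'
  have := d.rk_le_card_cols hB'
  rw [d.rk_diagSum A B ⟨α, β, hA'⟩ ⟨α', β', hB'⟩]
  omega

end Fin

noncomputable def rank {I J : Type*} [Fintype I] [Fintype J] (A : Matrix I J R) : ℕ :=
  d.rk (A.submatrix (Fintype.equivFin I).symm (Fintype.equivFin J).symm)

section Rank

variable {I J K I' J' : Type*} [Fintype I] [Fintype J] [Fintype K] [Fintype I'] [Fintype J']
  {α : I → Γ} {β : J → Γ} {κ : K → Γ} {α' : I' → Γ} {β' : J' → Γ}

theorem rank_mul_le_left {A : Matrix I J R} {B : Matrix J K R} {ε : K → Γ}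
    (hA : IsGrHomog 𝒜 A α β) (hB : IsGrHomog 𝒜 B β ε) : d.rank (A * B) ≤ d.rank A := by
  rw [rank, ← submatrix_mul_equiv A B _ (Fintype.equivFin J).symm _]
  exact d.rk_mul_le_left (hA.submatrix _ _) (hB.submatrix _ _)

theorem rank_mul_le_right {A : Matrix I J R} {B : Matrix J K R} {ε : K → Γ}
    (hA : IsGrHomog 𝒜 A α β) (hB : IsGrHomog 𝒜 B β ε) : d.rank (A * B) ≤ d.rank B := by
  rw [rank, ← submatrix_mul_equiv A B _ (Fintype.equivFin J).symm _]
  exact d.rk_mul_le_right (hA.submatrix _ _) (hB.submatrix _ _)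

variable [IsGradedMonoid 𝒜]

theorem rank_eq_rk_submatrix {A : Matrix I J R} (hA : IsGrHomog 𝒜 A α β) {p q : ℕ}
    (u : Fin p ≃ I) (v : Fin q ≃ J) : d.rank A = d.rk (A.submatrix u v) := by
  rw [rank, ← d.rk_submatrix_equiv (hA.submatrix _ _) (u.trans (Fintype.equivFin I))
    (v.trans (Fintype.equivFin J)), submatrix_submatrix]
  congr 1
  ext i j
  simp

theorem rank_eq_rk {m n : ℕ} {A : Matrix (Fin m) (Fin n) R} {α β} (hA : IsGrHomog 𝒜 A α β) :
    d.rank A = d.rk A :=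
  d.rank_eq_rk_submatrix hA (Equiv.refl _) (Equiv.refl _)

theorem rank_submatrix_le {A : Matrix I J R} (hA : IsGrHomog 𝒜 A α β) (e : I' → I)
    (f : J' → J) : d.rank (A.submatrix e f) ≤ d.rank A := by
  have := d.rk_submatrix_le (hA.submatrix (Fintype.equivFin I).symm (Fintype.equivFin J).symm)
    (Fintype.equivFin I ∘ e ∘ (Fintype.equivFin I').symm)
    (Fintype.equivFin J ∘ f ∘ (Fintype.equivFin J').symm)
  simpa [rank, submatrix_submatrix, ← Function.comp_assoc] using this

theorem rank_submatrix_equiv {A : Matrix I J R} (hA : IsGrHomog 𝒜 A α β) (e : I' ≃ I)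
    (f : J' ≃ J) : d.rank (A.submatrix e f) = d.rank A := by
  refine (d.rank_submatrix_le hA e f).antisymm ?_
  simpa using d.rank_submatrix_le (hA.submatrix e f) e.symm f.symm

theorem rank_one [DecidableEq I] : d.rank (1 : Matrix I I R) = Fintype.card I := by
  rw [rank, submatrix_one_equiv, d.rk_one]

theorem rank_mul_of_mul_eq_one_left [DecidableEq I'] {E : Matrix I I' R} {E' : Matrix I' I R}
    {M : Matrix I' J R} (hE : IsGrHomog 𝒜 E α α') (hE' : IsGrHomog 𝒜 E' α' α)
    (hM : IsGrHomog 𝒜 M α' β) (h : E' * E = 1) : d.rank (E * M) = d.rank M := by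
  refine (d.rank_mul_le_right hE hM).antisymm ?_
  simpa [← Matrix.mul_assoc, h] using d.rank_mul_le_right hE' (hE.mul hM)

theorem rank_mul_of_mul_eq_one_right [DecidableEq J] {M : Matrix I J R} {F : Matrix J J' R}
    {F' : Matrix J' J R} (hM : IsGrHomog 𝒜 M α β) (hF : IsGrHomog 𝒜 F β β')
    (hF' : IsGrHomog 𝒜 F' β' β) (h : F * F' = 1) : d.rank (M * F) = d.rank M := by
  refine (d.rank_mul_le_left hM hF).antisymm ?_
  simpa [Matrix.mul_assoc, h] using d.rank_mul_le_left (hM.mul hF) hF'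

theorem rank_fromBlocks_eq_rk {A : Matrix I J R} {B : Matrix I J' R} {C : Matrix I' J R}
    {D : Matrix I' J' R}
    (hM : IsGrHomog 𝒜 (fromBlocks A B C D) (Sum.elim α α') (Sum.elim β β')) :
    d.rank (fromBlocks A B C D) = d.rk (reindex finSumFinEquiv finSumFinEquiv (fromBlocks
      (A.submatrix (Fintype.equivFin I).symm (Fintype.equivFin J).symm)
      (B.submatrix (Fintype.equivFin I).symm (Fintype.equivFin J').symm)
      (C.submatrix (Fintype.equivFin I').symm (Fintype.equivFin J).symm)
      (D.submatrix (Fintype.equivFin I').symm (Fintype.equivFin J').symm))) := by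
  rw [d.rank_eq_rk_submatrix hM
    (finSumFinEquiv.symm.trans ((Fintype.equivFin I).symm.sumCongr (Fintype.equivFin I').symm))
    (finSumFinEquiv.symm.trans ((Fintype.equivFin J).symm.sumCongr (Fintype.equivFin J').symm))]
  congr 1
  ext i j
  rcases finSumFinEquiv.surjective i with ⟨i | i, rfl⟩ <;>
  rcases finSumFinEquiv.surjective j with ⟨j | j, rfl⟩ <;> simp

theorem rank_fromBlocks_zero_zero {A : Matrix I J R} {B : Matrix I' J' R}
    (hA : IsGrHomog 𝒜 A α β) (hB : IsGrHomog 𝒜 B α' β') :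
    d.rank (fromBlocks A 0 0 B) = d.rank A + d.rank B := by
  rw [d.rank_fromBlocks_eq_rk (.fromBlocks hA .zero .zero hB),
    d.rank_eq_rk_submatrix hA (Fintype.equivFin I).symm (Fintype.equivFin J).symm,
    d.rank_eq_rk_submatrix hB (Fintype.equivFin I').symm (Fintype.equivFin J').symm]
  simpa [diagSum] using d.rk_diagSum _ _ ⟨_, _, hA.submatrix _ _⟩ ⟨_, _, hB.submatrix _ _⟩

theorem rank_add_rank_le_rank_fromBlocks_zero₂₁ {A : Matrix I J R} {B : Matrix I' J' R}
    {C : Matrix I J' R} (hA : IsGrHomog 𝒜 A α β) (hB : IsGrHomog 𝒜 B α' β')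
    (hC : IsGrHomog 𝒜 C α β') :
    d.rank A + d.rank B ≤ d.rank (fromBlocks A C 0 B) := by
  rw [d.rank_fromBlocks_eq_rk (.fromBlocks hA hC .zero hB),
    d.rank_eq_rk_submatrix hA (Fintype.equivFin I).symm (Fintype.equivFin J).symm,
    d.rank_eq_rk_submatrix hB (Fintype.equivFin I').symm (Fintype.equivFin J').symm]
  simpa [upperBlockSum] using d.add_le_rk_upperBlockSum _ _ _ _ _ _ _
    (hA.submatrix _ _) (hB.submatrix _ _) (hC.submatrix _ _)

theorem rank_add_rank_le_rank_fromBlocks_zero₁₂ {A : Matrix I J R} {B : Matrix I' J' R}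
    {C : Matrix I' J R} (hA : IsGrHomog 𝒜 A α β) (hB : IsGrHomog 𝒜 B α' β')
    (hC : IsGrHomog 𝒜 C α' β) :
    d.rank A + d.rank B ≤ d.rank (fromBlocks A 0 C B) := by
  rw [add_comm, ← d.rank_submatrix_equiv (.fromBlocks hA .zero hC hB) (Equiv.sumComm I' I)
    (Equiv.sumComm J' J)]
  simpa using d.rank_add_rank_le_rank_fromBlocks_zero₂₁ hB hA hC

theorem rank_fromCols_le {A : Matrix I J R} {X : Matrix I K R} (hA : IsGrHomog 𝒜 A α β)
    (hX : IsGrHomog 𝒜 X α κ) : d.rank (fromCols A X) ≤ d.rank A + Fintype.card K := by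
  classical
  have h : fromCols A X = fromCols (1 : Matrix I I R) X * fromBlocks A 0 0 (1 : Matrix K K R) := by
    simp [fromCols_mul_fromBlocks]
  rw [h, ← d.rank_one (I := K), ← d.rank_fromBlocks_zero_zero hA (.one κ)]
  exact d.rank_mul_le_right ((IsGrHomog.one α).fromCols hX) (.fromBlocks hA .zero .zero (.one κ))

theorem rank_fromCols_add_le {A : Matrix I J R} {a b : Matrix I K R} (hA : IsGrHomog 𝒜 A α β)
    (ha : IsGrHomog 𝒜 a α κ) (hb : IsGrHomog 𝒜 b α κ) :
    d.rank (fromCols A (a + b)) ≤ d.rank (fromCols (fromCols A a) b) := by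
  classical
  have h : fromCols A (a + b) = fromCols (fromCols A a) b *
      fromRows (1 : Matrix (J ⊕ K) (J ⊕ K) R) (fromCols (0 : Matrix K J R) (1 : Matrix K K R)) := by
    rw [fromCols_mul_fromRows]
    ext i (j | k) <;> simp
  rw [h]
  exact d.rank_mul_le_left ((hA.fromCols ha).fromCols hb)
    ((IsGrHomog.one _).fromRows (IsGrHomog.zero.fromCols (.one κ)))

theorem rank_fromCols_fromCols_add_rank_le {A : Matrix I J R} {a b : Matrix I K R}
    (hA : IsGrHomog 𝒜 A α β) (ha : IsGrHomog 𝒜 a α κ) (hb : IsGrHomog 𝒜 b α κ) :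
    d.rank (fromCols (fromCols A a) b) + d.rank A ≤
      d.rank (fromCols A a) + d.rank (fromCols A b) := by
  classical
  set P := fromCols A a
  set Q := fromCols A b
  have hP : IsGrHomog 𝒜 P α (Sum.elim β κ) := hA.fromCols ha
  have hQ : IsGrHomog 𝒜 Q α (Sum.elim β κ) := hA.fromCols hb
  have h0b : IsGrHomog 𝒜 (fromCols (0 : Matrix I J R) b) α (Sum.elim β κ) :=
    IsGrHomog.zero.fromCols hb
  let S : Matrix (J ⊕ K) (J ⊕ K) R := fromBlocks 1 0 0 0
  have hS : IsGrHomog 𝒜 S (Sum.elim β κ) (Sum.elim β κ) := .fromBlocks (.one β) .zero .zero .zero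
  -- `E` adds the second block row to the first, then `F` clears the `A`-part of the new
  -- upper right block `Q` using the columns of `P`.
  let E : Matrix (I ⊕ I) (I ⊕ I) R := fromBlocks 1 1 0 1
  let E' : Matrix (I ⊕ I) (I ⊕ I) R := fromBlocks 1 (-1) 0 1
  let F : Matrix ((J ⊕ K) ⊕ (J ⊕ K)) ((J ⊕ K) ⊕ (J ⊕ K)) R := fromBlocks 1 (-S) 0 1
  let F' : Matrix ((J ⊕ K) ⊕ (J ⊕ K)) ((J ⊕ K) ⊕ (J ⊕ K)) R := fromBlocks 1 S 0 1
  have hE : IsGrHomog 𝒜 E (Sum.elim α α) (Sum.elim α α) :=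
    .fromBlocks (.one α) (.one α) .zero (.one α)
  have hE' : IsGrHomog 𝒜 E' (Sum.elim α α) (Sum.elim α α) :=
    .fromBlocks (.one α) (IsGrHomog.one α).neg .zero (.one α)
  have hF : IsGrHomog 𝒜 F _ _ := .fromBlocks (.one _) hS.neg .zero (.one _)
  have hF' : IsGrHomog 𝒜 F' _ _ := .fromBlocks (.one _) hS .zero (.one _)
  have hD : IsGrHomog 𝒜 (fromBlocks P 0 0 Q) _ _ := .fromBlocks hP .zero .zero hQ
  have hEDF : E * fromBlocks P 0 0 Q * F = fromBlocks P (fromCols 0 b) 0 Q := by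
    have hPS : -(P * S) + Q = fromCols 0 b := by
      simp only [P, Q, S, fromCols_mul_fromBlocks]
      ext i (j | k) <;> simp
    simp [E, F, fromBlocks_multiply, hPS]
  have hrank : d.rank (fromBlocks P (fromCols 0 b) 0 Q) = d.rank P + d.rank Q := by
    rw [← hEDF,
      d.rank_mul_of_mul_eq_one_right (hE.mul hD) hF hF' (by simp [F, F', fromBlocks_multiply]),
      d.rank_mul_of_mul_eq_one_left hE hE' hD (by simp [E, E', fromBlocks_multiply]),
      d.rank_fromBlocks_zero_zero hP hQ]
  let g : ((J ⊕ K) ⊕ K) ⊕ J ≃ (J ⊕ K) ⊕ (J ⊕ K) :=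
    (Equiv.sumAssoc _ _ _).trans (Equiv.sumCongr (Equiv.refl _) (Equiv.sumComm _ _))
  have hg : (fromBlocks P (fromCols 0 b) 0 Q).submatrix id g =
      fromBlocks (fromCols P b) 0 (fromCols 0 b) A := by
    ext (i | i) ((((j | k) | k) | j)) <;> simp [P, Q, g]
  rw [← hrank, ← d.rank_submatrix_equiv (.fromBlocks hP h0b .zero hQ) (Equiv.refl _) g]
  simp only [Equiv.coe_refl, hg]
  exact d.rank_add_rank_le_rank_fromBlocks_zero₁₂ (hP.fromCols hb) hA (IsGrHomog.zero.fromCols hb)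

theorem rank_fromCols_add_lt {A : Matrix I J R} {a b : Matrix I K R}
    (hA : IsGrHomog 𝒜 A α β) (ha : IsGrHomog 𝒜 a α κ) (hb : IsGrHomog 𝒜 b α κ)
    (hK : Fintype.card K = 1) (hra : d.rank (fromCols A a) < Fintype.card J + 1)
    (hrb : d.rank (fromCols A b) < Fintype.card J + 1) :
    d.rank (fromCols A (a + b)) < Fintype.card J + 1 := by
  have h₁ := d.rank_fromCols_le hA (ha.add hb)
  have h₂ := d.rank_fromCols_add_le hA ha hb
  have h₃ := d.rank_fromCols_fromCols_add_rank_le hA ha hb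
  omega

end Rank

variable [IsGradedMonoid 𝒜]

theorem rk_lt_of_isDetSum_col {n : ℕ} {A B C : Matrix (Fin n) (Fin n) R} {α β : Fin n → Γ}
    (hA : IsGrHomog 𝒜 A α β) (hB : IsGrHomog 𝒜 B α β) (c : Fin n)
    (hAB : ∀ i j, j ≠ c → A i j = B i j)
    (hC : ∀ i j, C i j = if j = c then A i j + B i j else A i j)
    (hrA : d.rk A < n) (hrB : d.rk B < n) : d.rk C < n := by
  let e := Equiv.sumCompl (· ≠ c)
  let A' := A.submatrix id (Subtype.val : {j // j ≠ c} → Fin n)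
  let a := A.submatrix id (Subtype.val : {j // ¬j ≠ c} → Fin n)
  let b := B.submatrix id (Subtype.val : {j // ¬j ≠ c} → Fin n)
  have hAe : A.submatrix id e = fromCols A' a := by
    ext i (j | j) <;> rfl
  have hBe : B.submatrix id e = fromCols A' b := by
    ext i (j | j)
    · simp [A', e, hAB i j j.2]
    · rfl
  have hCe : C.submatrix id e = fromCols A' (a + b) := by
    ext i (j | j)
    · simp [A', e, hC, j.2]
    · simp [A', a, b, e, hC, not_not.mp j.2]
  have rk_eq {M : Matrix (Fin n) (Fin n) R} (hM : IsGrHomog 𝒜 M α β) :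
      d.rk M = d.rank (M.submatrix id e) := by
    have := d.rank_submatrix_equiv hM (Equiv.refl _) e
    rw [Equiv.coe_refl] at this
    rw [this, d.rank_eq_rk hM]
  have hn : Fintype.card {j // j ≠ c} + 1 = n := by
    simp only [Fintype.card_subtype_compl, Fintype.card_fin, Fintype.card_unique]
    have := c.pos
    omega
  rw [rk_eq hA, hAe] at hrA
  rw [rk_eq hB, hBe] at hrB
  rw [rk_eq (hA.of_isDetSum hB (.inl ⟨c, hAB, hC⟩)), hCe]
  exact (d.rank_fromCols_add_lt (hA.submatrix _ _) (hA.submatrix _ _) (hB.submatrix _ _)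
    (by simp) (hrA.trans_eq hn.symm) (hrB.trans_eq hn.symm)).trans_eq hn

theorem add_le_rk_reindex_fromBlocks_zero₁₂ {m n m' n' : ℕ} {A : Matrix (Fin m) (Fin n) R}
    {B : Matrix (Fin m') (Fin n') R} {C : Matrix (Fin m') (Fin n) R} {α β δ ε}
    (hA : IsGrHomog 𝒜 A α β) (hB : IsGrHomog 𝒜 B δ ε) (hC : IsGrHomog 𝒜 C δ β) :
    d.rk A + d.rk B ≤ d.rk (reindex finSumFinEquiv finSumFinEquiv (fromBlocks A 0 C B)) := by
  rw [← d.rank_eq_rk hA, ← d.rank_eq_rk hB, reindex_apply,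
    ← d.rank_eq_rk_submatrix (.fromBlocks hA .zero hC hB)]
  exact d.rank_add_rank_le_rank_fromBlocks_zero₁₂ hA hB hC

open MulOpposite in
def op : GrSylvesterRank (oppGrading 𝒜) where
  rk A := d.rk (Aᵀ.map unop)
  rk_one_one := by simpa using d.rk_one_one
  rk_mul_le A B α β ε hA hB := by
    rw [transpose_map_unop_mul, min_comm]
    exact d.rk_mul_le _ _ _ _ _ (IsGrHomog.unop_transpose hB) (IsGrHomog.unop_transpose hA)
  rk_diagSum A B := by
    rintro ⟨α, β, hA⟩ ⟨α', β', hB⟩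
    rw [transpose_map_unop_diagSum]
    exact d.rk_diagSum _ _ ⟨_, _, IsGrHomog.unop_transpose hA⟩
      ⟨_, _, IsGrHomog.unop_transpose hB⟩
  add_le_rk_upperBlockSum A B C α β δ ε hA hB hC := by
    rw [transpose_map_unop_upperBlockSum]
    exact d.add_le_rk_reindex_fromBlocks_zero₁₂ (IsGrHomog.unop_transpose hA)
      (IsGrHomog.unop_transpose hB) (IsGrHomog.unop_transpose hC)

theorem op_rk_transpose_map_op {m n : ℕ} (A : Matrix (Fin m) (Fin n) R) :
    d.op.rk (Aᵀ.map MulOpposite.op) = d.rk A := by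
  have : (Aᵀ.map MulOpposite.op)ᵀ.map MulOpposite.unop = A := by
    ext
    simp
  exact congrArg d.rk this

theorem rk_lt_of_isDetSum {n : ℕ} {A B C : Matrix (Fin n) (Fin n) R} {α β : Fin n → Γ}
    (hA : IsGrHomog 𝒜 A α β) (hB : IsGrHomog 𝒜 B α β) (h : IsDetSum A B C)
    (hrA : d.rk A < n) (hrB : d.rk B < n) : d.rk C < n := by
  rcases h with ⟨c, hAB, hC⟩ | ⟨r, hAB, hC⟩
  · exact d.rk_lt_of_isDetSum_col hA hB c hAB hC hrA hrB
  · rw [← d.op_rk_transpose_map_op] at hrA hrB ⊢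
    refine d.op.rk_lt_of_isDetSum_col hA.op_transpose hB.op_transpose r
      (fun i j hj => by simp [hAB j i hj]) (fun i j => ?_) hrA hrB
    simp [hC j i, apply_ite MulOpposite.op]

end GrSylvesterRank

theorem grSylvesterMatrixRank_gives_grPrimeMatrixIdeal_general
    {Γ : Type u} [Group Γ] {R : Type v} [Ring R]
    (𝒜 : Γ → AddSubgroup R)
    (hone : (1 : R) ∈ 𝒜 1)
    (hmul : ∀ {γ δ : Γ} {x y : R}, x ∈ 𝒜 γ → y ∈ 𝒜 δ → x * y ∈ 𝒜 (γ * δ))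
    (rk : ∀ {m n : ℕ}, Matrix (Fin m) (Fin n) R → ℕ)
    (hrk1 : rk (1 : Matrix (Fin 1) (Fin 1) R) = 1)
    (hrk2 : ∀ {m n k : ℕ} (A : Matrix (Fin m) (Fin n) R) (B : Matrix (Fin n) (Fin k) R)
        (α : Fin m → Γ) (β : Fin n → Γ) (ε : Fin k → Γ),
        IsHomog 𝒜 A α β → IsHomog 𝒜 B β ε → rk (A * B) ≤ min (rk A) (rk B))
    (hrk3 : ∀ {m n m' n' : ℕ} (A : Matrix (Fin m) (Fin n) R)
        (B : Matrix (Fin m') (Fin n') R),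
        IsHomogSq 𝒜 A → IsHomogSq 𝒜 B → rk (diagSum A B) = rk A + rk B)
    (hrk4 : ∀ {m n m' n' : ℕ} (A : Matrix (Fin m) (Fin n) R)
        (B : Matrix (Fin m') (Fin n') R) (C : Matrix (Fin m) (Fin n') R)
        (α : Fin m → Γ) (β : Fin n → Γ) (δ : Fin m' → Γ) (ε : Fin n' → Γ),
        IsHomog 𝒜 A α β → IsHomog 𝒜 B δ ε → IsHomog 𝒜 C α ε →
        rk A + rk B ≤ rk (upperBlockSum A B C)) :
    IsGrPrimeMatrixIdeal 𝒜 {p : SqMat R | IsHomogSq 𝒜 p.2 ∧ rk p.2 < p.1} := by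
  have : IsGradedMonoid 𝒜 := ⟨hone, hmul⟩
  let d : GrSylvesterRank 𝒜 := ⟨rk, hrk1, hrk2, hrk3, hrk4⟩
  refine
    { subset_homog := fun _ hp => hp.1
      pm1 := fun _ hA hfull => ⟨hA, d.rk_lt_of_not_isGrFull hfull⟩
      pm2 := fun _ _ _ hA hB ⟨⟨_, _, hα, hβ⟩, h⟩ =>
        ⟨⟨_, _, IsGrHomog.of_isDetSum hα hβ h⟩, d.rk_lt_of_isDetSum hα hβ h hA.2 hB.2⟩
      pm3 := fun _ _ hA hB => ⟨hA.1.diagSum hB, (d.rk_diagSum_lt_iff hA.1 hB).2 (.inl hA.2)⟩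
      pm4 := fun _ _ hA hB h => ((d.rk_diagSum_lt_iff hA hB).1 h.2).imp (⟨hA, ·⟩) (⟨hB, ·⟩)
      pm5 := fun h => by simp [hrk1] at h
      pm6 := fun _ e f ⟨⟨_, _, hA⟩, h⟩ =>
        ⟨⟨_, _, IsGrHomog.submatrix hA e f⟩, (d.rk_submatrix_equiv hA e f).trans_lt h⟩ }

/-- Let `R` be a `Γ`-graded ring and `rk` a gr-Sylvester matrix
rank function for `R` (an `ℕ`-valued function on rectangular homogeneous matrices
satisfying (MatRF1)–(MatRF4)).  Then
`𝒫 = {A ∈ 𝔐(R) : rk A < n, A of size n × n}` is a gr-prime matrix ideal. -/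
theorem grSylvesterMatrixRank_gives_grPrimeMatrixIdeal
    {Γ : Type u} [Group Γ] [DecidableEq Γ] {R : Type v} [Ring R]
    (𝒜 : Γ → AddSubgroup R)
    (hinternal : DirectSum.IsInternal 𝒜)
    (hone : (1 : R) ∈ 𝒜 1)
    (hmul : ∀ {γ δ : Γ} {x y : R}, x ∈ 𝒜 γ → y ∈ 𝒜 δ → x * y ∈ 𝒜 (γ * δ))
    (rk : ∀ {m n : ℕ}, Matrix (Fin m) (Fin n) R → ℕ)
    (hrk1 : rk (1 : Matrix (Fin 1) (Fin 1) R) = 1)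
    (hrk2 : ∀ {m n k : ℕ} (A : Matrix (Fin m) (Fin n) R) (B : Matrix (Fin n) (Fin k) R)
        (α : Fin m → Γ) (β : Fin n → Γ) (ε : Fin k → Γ),
        IsHomog 𝒜 A α β → IsHomog 𝒜 B β ε → rk (A * B) ≤ min (rk A) (rk B))
    (hrk3 : ∀ {m n m' n' : ℕ} (A : Matrix (Fin m) (Fin n) R)
        (B : Matrix (Fin m') (Fin n') R),
        IsHomogSq 𝒜 A → IsHomogSq 𝒜 B → rk (diagSum A B) = rk A + rk B)
    (hrk4 : ∀ {m n m' n' : ℕ} (A : Matrix (Fin m) (Fin n) R)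
        (B : Matrix (Fin m') (Fin n') R) (C : Matrix (Fin m) (Fin n') R)
        (α : Fin m → Γ) (β : Fin n → Γ) (δ : Fin m' → Γ) (ε : Fin n' → Γ),
        IsHomog 𝒜 A α β → IsHomog 𝒜 B δ ε → IsHomog 𝒜 C α ε →
        rk A + rk B ≤ rk (upperBlockSum A B C)) :
    IsGrPrimeMatrixIdeal 𝒜 {p : SqMat R | IsHomogSq 𝒜 p.2 ∧ rk p.2 < p.1} :=
  grSylvesterMatrixRank_gives_grPrimeMatrixIdeal_general 𝒜 hone hmul rk hrk1 hrk2 hrk3 hrk4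
end
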